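/- arXiv:2505.04539 — 8 statements merged into one kernel-verified Lean document; each statement's English description precedes it below -/
import Mathlib

section
/- Let M=(S,A,P) be an RMDP and T ⊆ S a target set. For every state s ∈ S: s ∈ PAttr_A(M,T) if and only if there exists a pure memoryless agent policy σ such that for all environment policies ρ we have ℙ^{σ,ρ}_M(s)[Reach(T)] > 0. -/
open scoped BigOperators Classical

/-- A robust MDP over finite state set `S` and finite action set `A`.
Distributions are represented as real-valued probability vectors `S → ℝ`. -/
structure RMDP (S A : Type) [Fintype S] [Fintype A] where
  /-- available actions at each state -/
  Act : S → Finset A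
  Act_nonempty : ∀ s, (Act s).Nonempty
  /-- the uncertainty sets -/
  P : S → A → Set (S → ℝ)
  P_prob : ∀ s, ∀ a ∈ Act s, ∀ p ∈ P s a, (∀ t, 0 ≤ p t) ∧ ∑ t, p t = 1
  P_nonempty : ∀ s, ∀ a ∈ Act s, (P s a).Nonempty
  P_compact : ∀ s, ∀ a ∈ Act s, IsCompact (P s a)

variable {S A : Type} [Fintype S] [Nonempty S] [Fintype A]

/-- An agent policy: given a history and the current state, a probability
distribution over the available actions. -/
structure AgentPolicy (M : RMDP S A) where
  toFun : List (S × A) → S → A → ℝ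
  nonneg : ∀ h s a, 0 ≤ toFun h s a
  sum_one : ∀ h s, ∑ a, toFun h s a = 1
  mem_act : ∀ h s a, toFun h s a ≠ 0 → a ∈ M.Act s

/-- An environment policy: given a history, the current state and the chosen
action, a distribution from the uncertainty set. -/
structure EnvPolicy (M : RMDP S A) where
  toFun : List (S × A) → S → A → S → ℝ
  mem : ∀ h s, ∀ a ∈ M.Act s, toFun h s a ∈ M.P s a

/-- A pure memoryless agent policy deterministically picks an action
depending only on the current state. -/
def AgentPolicy.PureMemoryless {M : RMDP S A} (σ : AgentPolicy M) : Prop :=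
  ∃ f : S → A, ∀ h s a, σ.toFun h s a = if a = f s then 1 else 0

/-- A pure memoryless environment policy picks the transition distribution
depending only on the current state and action. -/
def EnvPolicy.PureMemoryless {M : RMDP S A} (ρ : EnvPolicy M) : Prop :=
  ∃ g : S → A → S → ℝ, ∀ h s a, ρ.toFun h s a = g s a

/-- Probability, under policies `σ, ρ`, of reaching the target `T` within `k`
steps, starting from state `s` with history `h`. -/
noncomputable def reachK (M : RMDP S A) (σ : AgentPolicy M) (ρ : EnvPolicy M) (T : Set S) :
    ℕ → List (S × A) → S → ℝ
  | 0, _, s => if s ∈ T then 1 else 0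
  | k + 1, h, s =>
      if s ∈ T then 1
      else ∑ a, σ.toFun h s a * ∑ t, ρ.toFun h s a t * reachK M σ ρ T k (h ++ [(s, a)]) t

/-- `ℙ^{σ,ρ}_M(s)[Reach(T)]`: the probability of eventually reaching `T`,
which is the supremum over `k` of the probabilities of reaching `T` within `k` steps. -/
noncomputable def reachProb (M : RMDP S A) (σ : AgentPolicy M) (ρ : EnvPolicy M)
    (T : Set S) (s : S) : ℝ :=
  ⨆ k : ℕ, reachK M σ ρ T k [] s

/-- `Val^{s,σ}_M(Reach(T)) = inf_ρ ℙ^{σ,ρ}_M(s)[Reach(T)]`. -/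
noncomputable def reachVal (M : RMDP S A) (σ : AgentPolicy M) (T : Set S) (s : S) : ℝ :=
  ⨅ ρ : EnvPolicy M, reachProb M σ ρ T s

/-- `Val^{s}_M(Reach(T)) = sup_σ inf_ρ ℙ^{σ,ρ}_M(s)[Reach(T)]`. -/
noncomputable def reachValSup (M : RMDP S A) (T : Set S) (s : S) : ℝ :=
  ⨆ σ : AgentPolicy M, reachVal M σ T s

/-- `force_A(s,B)`: the agent has an action that reaches `B` with positive
probability no matter which distribution the environment picks. -/
def forceA (M : RMDP S A) (s : S) (B : Set S) : Prop :=
  ∃ a ∈ M.Act s, ∀ p ∈ M.P s a, 0 < ∑ t, B.indicator p t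

/-- `force_E(s,B)`: whatever action the agent picks, the environment can pick a
distribution reaching `B` with positive probability. -/
def forceE (M : RMDP S A) (s : S) (B : Set S) : Prop :=
  ∀ a ∈ M.Act s, ∃ p ∈ M.P s a, 0 < ∑ t, B.indicator p t

/-- The increasing sequence `T₀ = T`, `T_{i+1} = T_i ∪ {s | force_A(s, T_i)}`. -/
def attrSeqA (M : RMDP S A) (T : Set S) : ℕ → Set S
  | 0 => T
  | i + 1 => attrSeqA M T i ∪ {s | forceA M s (attrSeqA M T i)}

/-- The positive attractor of the agent. -/
def PAttrA (M : RMDP S A) (T : Set S) : Set S := ⋃ i, attrSeqA M T i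

/-- The increasing sequence `T₀ = T`, `T_{i+1} = T_i ∪ {s | force_E(s, T_i)}`. -/
def attrSeqE (M : RMDP S A) (T : Set S) : ℕ → Set S
  | 0 => T
  | i + 1 => attrSeqE M T i ∪ {s | forceE M s (attrSeqE M T i)}

/-- The positive attractor of the environment. -/
def PAttrE (M : RMDP S A) (T : Set S) : Set S := ⋃ i, attrSeqE M T i

/-! The agent's pure memoryless policy plays, at every state of the attractor, an action forcing
the earliest stage `attrSeqA i` it can force; induction on the stage then gives a positive
probability of reaching `T` within `i` steps against every environment. Conversely, the attractor
stabilises because `S` is finite, so from outside it no action forces it: the environment can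
pick, at every such state and action, a distribution putting no mass on the attractor, and then
`T` is never reached from outside, whatever the agent does. -/

section
variable {ι : Type*} [Fintype ι]

theorem sum_mul_mem_Icc {p r : ι → ℝ} (hp : ∀ i, 0 ≤ p i)
    (hp1 : ∑ i, p i = 1) (hr : ∀ i, p i ≠ 0 → r i ∈ Set.Icc 0 1) :
    ∑ i, p i * r i ∈ Set.Icc 0 1 := by
  have hterm : ∀ i, 0 ≤ p i * r i ∧ p i * r i ≤ p i := fun i => by
    rcases eq_or_ne (p i) 0 with h0 | h0
    · simp [h0]
    · exact ⟨mul_nonneg (hp i) (hr i h0).1, mul_le_of_le_one_right (hp i) (hr i h0).2⟩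
  refine ⟨Finset.sum_nonneg fun i _ => (hterm i).1, ?_⟩
  calc ∑ i, p i * r i ≤ ∑ i, p i := Finset.sum_le_sum fun i _ => (hterm i).2
    _ = 1 := hp1

theorem sum_indicator_mono {p : ι → ℝ} (hp : ∀ t, 0 ≤ p t) {B C : Set ι} (hBC : B ⊆ C) :
    ∑ t, B.indicator p t ≤ ∑ t, C.indicator p t :=
  Finset.sum_le_sum fun _ _ => Set.indicator_le_indicator_of_subset hBC hp _

theorem sum_mul_pos_of_sum_indicator_pos {p r : ι → ℝ} {B : Set ι} (hp : ∀ t, 0 ≤ p t)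
    (hr : ∀ t, 0 ≤ r t) (hpB : 0 < ∑ t, B.indicator p t) (hrB : ∀ t ∈ B, 0 < r t) :
    0 < ∑ t, p t * r t := by
  obtain ⟨u, -, hu⟩ := Finset.exists_ne_zero_of_sum_ne_zero hpB.ne'
  obtain ⟨huB, hpu⟩ := Set.indicator_apply_ne_zero.mp hu
  exact Finset.sum_pos' (fun t _ => mul_nonneg (hp t) (hr t))
    ⟨u, Finset.mem_univ u, mul_pos ((hp u).lt_of_ne' hpu) (hrB u huB)⟩

end

section
omit [Nonempty S]

variable {M : RMDP S A} {T : Set S}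

theorem EnvPolicy.nonneg (ρ : EnvPolicy M) (h : List (S × A)) {s : S} {a : A}
    (ha : a ∈ M.Act s) (t : S) : 0 ≤ ρ.toFun h s a t :=
  (M.P_prob s a ha _ (ρ.mem h s a ha)).1 t

theorem EnvPolicy.sum_eq_one (ρ : EnvPolicy M) (h : List (S × A)) {s : S} {a : A}
    (ha : a ∈ M.Act s) : ∑ t, ρ.toFun h s a t = 1 :=
  (M.P_prob s a ha _ (ρ.mem h s a ha)).2

theorem reachK_mem_Icc (σ : AgentPolicy M) (ρ : EnvPolicy M) (k : ℕ)
    (h : List (S × A)) (s : S) : reachK M σ ρ T k h s ∈ Set.Icc 0 1 := by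
  induction k generalizing h s with
  | zero => rw [reachK]; split_ifs <;> norm_num
  | succ k ih =>
    rw [reachK]
    split_ifs
    · norm_num
    · refine sum_mul_mem_Icc (σ.nonneg h s) (σ.sum_one h s) fun a ha => ?_
      have ha := σ.mem_act h s a ha
      exact sum_mul_mem_Icc (ρ.nonneg h ha) (ρ.sum_eq_one h ha) fun t _ => ih _ t

theorem reachK_le_reachProb (σ : AgentPolicy M) (ρ : EnvPolicy M) (k : ℕ) (s : S) :
    reachK M σ ρ T k [] s ≤ reachProb M σ ρ T s :=
  le_ciSup (f := fun j => reachK M σ ρ T j [] s)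
    ⟨1, by rintro _ ⟨j, rfl⟩; exact (reachK_mem_Icc σ ρ j [] s).2⟩ k

theorem forceA_mono {s : S} {B C : Set S} (hBC : B ⊆ C) (hB : forceA M s B) :
    forceA M s C := by
  obtain ⟨a, ha, hpos⟩ := hB
  exact ⟨a, ha, fun p hp =>
    (hpos p hp).trans_le (sum_indicator_mono (M.P_prob s a ha p hp).1 hBC)⟩

variable (M T)

theorem attrSeqA_mono : Monotone (attrSeqA M T) :=
  monotone_nat_of_le_succ fun _ => Set.subset_union_left

theorem subset_PAttrA : T ⊆ PAttrA M T :=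
  Set.subset_iUnion (attrSeqA M T) 0

theorem forceA_of_mem_attrSeqA_succ {s : S} {i : ℕ} (hs : s ∈ attrSeqA M T (i + 1))
    (hsT : s ∉ T) : forceA M s (attrSeqA M T i) := by
  induction i with
  | zero => exact hs.resolve_left hsT
  | succ i ih =>
    rcases hs with hs | hs
    · exact forceA_mono (attrSeqA_mono M T i.le_succ) (ih hs)
    · exact hs

theorem exists_PAttrA_eq_attrSeqA : ∃ n, PAttrA M T = attrSeqA M T n := by
  obtain ⟨n, hn⟩ := WellFoundedGT.monotone_chain_condition ⟨attrSeqA M T, attrSeqA_mono M T⟩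
  refine ⟨n, (Set.iUnion_subset fun i => ?_).antisymm (Set.subset_iUnion _ n)⟩
  rcases le_total i n with hin | hni
  · exact attrSeqA_mono M T hin
  · exact (hn i hni).ge

theorem not_forceA_PAttrA {s : S} (hs : s ∉ PAttrA M T) : ¬ forceA M s (PAttrA M T) := by
  obtain ⟨n, hn⟩ := exists_PAttrA_eq_attrSeqA M T
  intro hforce
  rw [hn] at hs hforce
  exact hs (hn ▸ Set.mem_iUnion_of_mem (n + 1) (Or.inr hforce))

noncomputable def attrAction (s : S) : A :=
  if h : ∃ i, forceA M s (attrSeqA M T i) then (Nat.find_spec h).choose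
  else (M.Act_nonempty s).choose

theorem attrAction_mem (s : S) : attrAction M T s ∈ M.Act s := by
  rw [attrAction]
  split_ifs with h
  · exact (Nat.find_spec h).choose_spec.1
  · exact (M.Act_nonempty s).choose_spec

theorem attrAction_forces {s : S} {i : ℕ} (hs : forceA M s (attrSeqA M T i)) :
    ∀ p ∈ M.P s (attrAction M T s), 0 < ∑ t, (attrSeqA M T i).indicator p t := by
  have h : ∃ i, forceA M s (attrSeqA M T i) := ⟨i, hs⟩
  obtain ⟨ha, hpos⟩ := (Nat.find_spec h).choose_spec
  rw [attrAction, dif_pos h]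
  exact fun p hp => (hpos p hp).trans_le
    (sum_indicator_mono (M.P_prob s _ ha p hp).1 (attrSeqA_mono M T (Nat.find_min' h hs)))

variable {M T}

noncomputable def AgentPolicy.pure (f : S → A) (hf : ∀ s, f s ∈ M.Act s) : AgentPolicy M where
  toFun _ s a := if a = f s then 1 else 0
  nonneg _ _ _ := by split_ifs <;> norm_num
  sum_one _ s := by simp
  mem_act _ s a ha := (ite_ne_right_iff.mp ha).1 ▸ hf s

theorem AgentPolicy.pure_pureMemoryless (f : S → A) (hf : ∀ s, f s ∈ M.Act s) :
    (AgentPolicy.pure f hf).PureMemoryless :=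
  ⟨f, fun _ _ _ => rfl⟩

theorem reachK_pure_succ (f : S → A) (hf : ∀ s, f s ∈ M.Act s) (ρ : EnvPolicy M) (k : ℕ)
    (h : List (S × A)) (s : S) :
    reachK M (.pure f hf) ρ T (k + 1) h s = if s ∈ T then 1 else
      ∑ t, ρ.toFun h s (f s) t * reachK M (.pure f hf) ρ T k (h ++ [(s, f s)]) t := by
  simp [reachK, AgentPolicy.pure]

variable (M T)

noncomputable def attrPolicy : AgentPolicy M :=
  AgentPolicy.pure (attrAction M T) (attrAction_mem M T)

theorem reachK_attrPolicy_pos (ρ : EnvPolicy M) {i : ℕ} {s : S} (hs : s ∈ attrSeqA M T i)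
    (h : List (S × A)) : 0 < reachK M (attrPolicy M T) ρ T i h s := by
  induction i generalizing h s with
  | zero => simp [reachK, show s ∈ T from hs]
  | succ i ih =>
    rw [attrPolicy, reachK_pure_succ]
    split_ifs with hsT
    · exact one_pos
    · have ha := attrAction_mem M T s
      exact sum_mul_pos_of_sum_indicator_pos (ρ.nonneg h ha)
        (fun t => (reachK_mem_Icc _ ρ i _ t).1)
        (attrAction_forces M T (forceA_of_mem_attrSeqA_succ M T hs hsT) _ (ρ.mem h s _ ha))
        fun t ht => ih ht _

variable {M T}

theorem exists_mem_P_eq_zero_of_not_forceA {s : S} {B : Set S} (hs : ¬ forceA M s B) {a : A}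
    (ha : a ∈ M.Act s) : ∃ p ∈ M.P s a, ∀ t ∈ B, p t = 0 := by
  simp only [forceA, not_exists, not_and, not_forall, not_lt] at hs
  obtain ⟨p, hp, hle⟩ := hs a ha
  have hB : ∀ t, 0 ≤ B.indicator p t :=
    Set.indicator_nonneg fun t _ => (M.P_prob s a ha p hp).1 t
  have hzero := (Finset.sum_eq_zero_iff_of_nonneg fun t _ => hB t).mp
    (hle.antisymm (Finset.sum_nonneg fun t _ => hB t))
  exact ⟨p, hp, fun t ht => by
    simpa [Set.indicator_of_mem ht] using hzero t (Finset.mem_univ t)⟩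

def EnvPolicy.KeepsOut (ρ : EnvPolicy M) (W : Set S) : Prop :=
  ∀ h s, s ∉ W → ∀ a ∈ M.Act s, ∀ t ∈ W, ρ.toFun h s a t = 0

theorem exists_envPolicy_keepsOut {W : Set S} (hW : ∀ s ∉ W, ¬ forceA M s W) :
    ∃ ρ : EnvPolicy M, ρ.KeepsOut W := by
  have hchoice : ∀ s a, a ∈ M.Act s → ∃ p ∈ M.P s a, s ∉ W → ∀ t ∈ W, p t = 0 := by
    intro s a ha
    by_cases hs : s ∈ W
    · obtain ⟨p, hp⟩ := M.P_nonempty s a ha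
      exact ⟨p, hp, absurd hs⟩
    · obtain ⟨p, hp, hp0⟩ := exists_mem_P_eq_zero_of_not_forceA (hW s hs) ha
      exact ⟨p, hp, fun _ => hp0⟩
  choose! g hgP hg0 using hchoice
  exact ⟨⟨fun _ s a => g s a, fun _ s a ha => hgP s a ha⟩, fun _ s hs a ha => hg0 s a ha hs⟩

theorem reachK_eq_zero_of_keepsOut (σ : AgentPolicy M) (ρ : EnvPolicy M) {W : Set S}
    (hTW : T ⊆ W) (hρ : ρ.KeepsOut W) (k : ℕ) (h : List (S × A)) {s : S} (hs : s ∉ W) :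
    reachK M σ ρ T k h s = 0 := by
  induction k generalizing h s with
  | zero => rw [reachK, if_neg fun hsT => hs (hTW hsT)]
  | succ k ih =>
    rw [reachK, if_neg fun hsT => hs (hTW hsT)]
    refine Finset.sum_eq_zero fun a _ => ?_
    rcases eq_or_ne (σ.toFun h s a) 0 with h0 | h0
    · rw [h0, zero_mul]
    · refine mul_eq_zero_of_right _ (Finset.sum_eq_zero fun t _ => ?_)
      by_cases ht : t ∈ W
      · rw [hρ h s hs a (σ.mem_act h s a h0) t ht, zero_mul]
      · rw [ih _ ht, mul_zero]

theorem reachProb_eq_zero_of_keepsOut (σ : AgentPolicy M) (ρ : EnvPolicy M) {W : Set S}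
    (hTW : T ⊆ W) (hρ : ρ.KeepsOut W) {s : S} (hs : s ∉ W) : reachProb M σ ρ T s = 0 := by
  simp only [reachProb, reachK_eq_zero_of_keepsOut σ ρ hTW hρ _ _ hs, ciSup_const]

end

theorem stmt0 (M : RMDP S A) (T : Set S) (s : S) :
    s ∈ PAttrA M T ↔
      ∃ σ : AgentPolicy M, σ.PureMemoryless ∧
        ∀ ρ : EnvPolicy M, 0 < reachProb M σ ρ T s := by
  constructor
  · intro hs
    obtain ⟨i, hi⟩ := Set.mem_iUnion.mp hs
    exact ⟨attrPolicy M T, AgentPolicy.pure_pureMemoryless _ _, fun ρ =>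
      (reachK_attrPolicy_pos M T ρ hi []).trans_le (reachK_le_reachProb _ ρ i s)⟩
  · rintro ⟨σ, -, hσ⟩
    by_contra hs
    obtain ⟨ρ, hρ⟩ := exists_envPolicy_keepsOut fun t => not_forceA_PAttrA M T (s := t)
    exact (hσ ρ).ne' (reachProb_eq_zero_of_keepsOut σ ρ (subset_PAttrA M T) hρ hs)
end

section
/- Let M=(S,A,P) be an RMDP (so each uncertainty set P(s,a) is a nonempty compact set of probability distributions on the finite set S). Then there exists a constant p_A > 0 such that for all s ∈ S and B ⊆ S for which force_A(s,B) holds, there is an action a ∈ A(s) with δ[B] ≥ p_A for every δ ∈ P(s,a); and there exists a constant p_E > 0 such that for all s ∈ S and B ⊆ S for which force_E(s,B) holds, for every a ∈ A(s) there is some δ ∈ P(s,a) with δ[B] ≥ p_E. -/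
open scoped BigOperators Classical

variable {S A : Type} [Fintype S] [Nonempty S] [Fintype A]

private theorem stmt2_aux (s : Set (S → ℝ)) (hc : IsCompact s) (hn : s.Nonempty) (B : Set S)
    (h : ∀ p ∈ s, 0 < ∑ t, B.indicator p t) :
    ∃ c > 0, ∀ p ∈ s, c ≤ ∑ t, B.indicator p t := by
  have hcont : Continuous fun p : S → ℝ => ∑ t, B.indicator p t := by
    apply continuous_finset_sum
    intro t _
    by_cases ht : t ∈ B
    · simpa [Set.indicator_of_mem ht] using continuous_apply t
    · simpa [Set.indicator_of_notMem ht] using continuous_const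
  obtain ⟨x, hx, hmin⟩ := hc.exists_isMinOn hn hcont.continuousOn
  exact ⟨_, h x hx, fun p hp => hmin hp⟩

theorem stmt2 (M : RMDP S A) :
    (∃ pA : ℝ, 0 < pA ∧ ∀ (s : S) (B : Set S), forceA M s B →
        ∃ a ∈ M.Act s, ∀ p ∈ M.P s a, pA ≤ ∑ t, B.indicator p t) ∧
    (∃ pE : ℝ, 0 < pE ∧ ∀ (s : S) (B : Set S), forceE M s B →
        ∀ a ∈ M.Act s, ∃ p ∈ M.P s a, pE ≤ ∑ t, B.indicator p t) := by
  have hA : Nonempty A := by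
    obtain ⟨a, _⟩ := M.Act_nonempty (Classical.arbitrary S)
    exact ⟨a⟩
  constructor
  · -- agent part
    set g : S × A × Set S → ℝ := fun x =>
      if h : x.2.1 ∈ M.Act x.1 ∧ ∀ p ∈ M.P x.1 x.2.1, 0 < ∑ t, (x.2.2).indicator p t then
        Classical.choose (stmt2_aux (M.P x.1 x.2.1) (M.P_compact x.1 x.2.1 h.1)
          (M.P_nonempty x.1 x.2.1 h.1) x.2.2 h.2)
      else 1 with hg
    have hgpos : ∀ x, 0 < g x := by
      intro x
      rw [hg]
      dsimp only
      split
      · rename_i h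
        exact (Classical.choose_spec (stmt2_aux (M.P x.1 x.2.1) (M.P_compact x.1 x.2.1 h.1)
          (M.P_nonempty x.1 x.2.1 h.1) x.2.2 h.2)).1
      · exact one_pos
    refine ⟨Finset.univ.inf' Finset.univ_nonempty g, ?_, ?_⟩
    · exact (Finset.lt_inf'_iff _).2 fun x _ => hgpos x
    · intro s B hfB
      obtain ⟨a, ha, hpos⟩ := hfB
      refine ⟨a, ha, fun p hp => ?_⟩
      have hcond : (s, a, B).2.1 ∈ M.Act (s, a, B).1 ∧
          ∀ q ∈ M.P (s, a, B).1 (s, a, B).2.1, 0 < ∑ t, ((s, a, B).2.2).indicator q t :=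
        ⟨ha, hpos⟩
      have hle : g (s, a, B) ≤ ∑ t, B.indicator p t := by
        rw [hg]
        dsimp only
        rw [dif_pos hcond]
        exact (Classical.choose_spec (stmt2_aux (M.P s a) (M.P_compact s a hcond.1)
          (M.P_nonempty s a hcond.1) B hcond.2)).2 p hp
      exact le_trans (Finset.inf'_le g (Finset.mem_univ _)) hle
  · -- environment part
    set g : S × A × Set S → ℝ := fun x =>
      if h : ∃ p ∈ M.P x.1 x.2.1, 0 < ∑ t, (x.2.2).indicator p t then
        ∑ t, (x.2.2).indicator (Classical.choose h) t
      else 1 with hg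
    have hgpos : ∀ x, 0 < g x := by
      intro x
      rw [hg]
      dsimp only
      split
      · rename_i h
        exact (Classical.choose_spec h).2
      · exact one_pos
    refine ⟨Finset.univ.inf' Finset.univ_nonempty g, ?_, ?_⟩
    · exact (Finset.lt_inf'_iff _).2 fun x _ => hgpos x
    · intro s B hfB a ha
      obtain ⟨p, hp, hpos⟩ := hfB a ha
      have hcond : ∃ q ∈ M.P (s, a, B).1 (s, a, B).2.1,
          0 < ∑ t, ((s, a, B).2.2).indicator q t := ⟨p, hp, hpos⟩
      refine ⟨Classical.choose hcond, (Classical.choose_spec hcond).1, ?_⟩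
      have hle : g (s, a, B) = ∑ t, B.indicator (Classical.choose hcond) t := by
        rw [hg]; dsimp only; rw [dif_pos hcond]
      exact hle ▸ Finset.inf'_le g (Finset.mem_univ _)
end

section
/- Let M=(S,A,P) be an RMDP and T ⊆ S. If m > 0 and there exists a pure memoryless agent policy σ such that Val^{s,σ}_M(Reach(T)) ≥ m for every state s ∈ S, then Val^{s,σ}_M(Reach(T)) = 1 for every state s ∈ S. -/
open scoped BigOperators Classical

variable {S A : Type} [Fintype S] [Nonempty S] [Fintype A]

/-!
Fix the agent's action map `f`. The environment's strategies against `f` form a product, indexed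
by (history, state), of compact uncertainty sets, hence a compact set, on which the probability of
reaching `T` within `k` steps is continuous and increasing in `k`. Every strategy reaches `T` with
probability at least `m` in the limit, so compactness yields one horizon `N` within which `T` is
reached with probability `> m / 2` from every state; as a strategy shifted by a history prefix is
again a strategy, this holds after every history. Hence `T` is avoided for `j * N` steps with
probability at most `(1 - m / 2) ^ j`, which tends to `0`.
-/

open Set Filter Topology

theorem IsCompact.exists_forall_lt_of_monotone {X : Type*} [TopologicalSpace X] {K : Set X}
    (hK : IsCompact K) {F : ℕ → X → ℝ} (hF : ∀ n, Continuous (F n))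
    (hmono : ∀ x ∈ K, Monotone fun n => F n x) {c : ℝ} (hc : ∀ x ∈ K, ∃ n, c < F n x) :
    ∃ N, ∀ x ∈ K, c < F N x := by
  obtain ⟨t, ht⟩ := hK.elim_finite_subcover (fun n => {x | c < F n x})
    (fun n => isOpen_lt continuous_const (hF n)) fun x hx => mem_iUnion.2 (hc x hx)
  refine ⟨t.sup id, fun x hx => ?_⟩
  obtain ⟨n, hn, hxn⟩ := mem_iUnion₂.1 (ht hx)
  exact hxn.trans_le (hmono x hx (Finset.le_sup (f := id) hn))

section Chain

variable {S A : Type} [Fintype S] (f : S → A) (T : Set S)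

/-- Reachability within `k` steps once the agent is fixed to the action map `f`; the environment
is described by `g`, which assigns a successor distribution to every (history, state) pair. -/
noncomputable def chainReachK (g : List (S × A) × S → S → ℝ) : ℕ → List (S × A) → S → ℝ
  | 0, _, s => if s ∈ T then 1 else 0
  | k + 1, h, s =>
      if s ∈ T then 1 else ∑ t, g (h, s) t * chainReachK g k (h ++ [(s, f s)]) t

def IsProbFamily (g : List (S × A) × S → S → ℝ) : Prop :=
  ∀ p, (∀ t, 0 ≤ g p t) ∧ ∑ t, g p t = 1

variable {f T} {g : List (S × A) × S → S → ℝ}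

theorem chainReachK_of_mem {s : S} (hs : s ∈ T) (k : ℕ) (h : List (S × A)) :
    chainReachK f T g k h s = 1 := by
  cases k <;> simp [chainReachK, hs]

theorem chainReachK_succ_of_notMem {s : S} (hs : s ∉ T) (k : ℕ) (h : List (S × A)) :
    chainReachK f T g (k + 1) h s =
      ∑ t, g (h, s) t * chainReachK f T g k (h ++ [(s, f s)]) t := by
  simp [chainReachK, hs]

theorem chainReachK_nonneg (hg : IsProbFamily g) (k : ℕ) (h : List (S × A)) (s : S) :
    0 ≤ chainReachK f T g k h s := by
  induction k generalizing h s with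
  | zero => simp only [chainReachK]; split <;> norm_num
  | succ k ih =>
    by_cases hs : s ∈ T
    · simp [chainReachK_of_mem hs]
    · rw [chainReachK_succ_of_notMem hs]
      exact Finset.sum_nonneg fun t _ => mul_nonneg ((hg _).1 t) (ih _ _)

theorem chainReachK_le_one (hg : IsProbFamily g) (k : ℕ) (h : List (S × A)) (s : S) :
    chainReachK f T g k h s ≤ 1 := by
  induction k generalizing h s with
  | zero => simp only [chainReachK]; split <;> norm_num
  | succ k ih =>
    by_cases hs : s ∈ T
    · simp [chainReachK_of_mem hs]
    · rw [chainReachK_succ_of_notMem hs]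
      calc ∑ t, g (h, s) t * chainReachK f T g k (h ++ [(s, f s)]) t
          ≤ ∑ t, g (h, s) t * 1 :=
            Finset.sum_le_sum fun t _ => mul_le_mul_of_nonneg_left (ih _ _) ((hg _).1 t)
        _ = 1 := by simp [(hg _).2]

theorem chainReachK_monotone (hg : IsProbFamily g) (h : List (S × A)) (s : S) :
    Monotone fun k => chainReachK f T g k h s := by
  refine monotone_nat_of_le_succ fun k => ?_
  induction k generalizing h s with
  | zero =>
    by_cases hs : s ∈ T
    · simp [chainReachK_of_mem hs]
    · simpa [chainReachK, hs] using chainReachK_nonneg (f := f) (T := T) hg 1 h s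
  | succ k ih =>
    by_cases hs : s ∈ T
    · simp [chainReachK_of_mem hs]
    · simp only [chainReachK_succ_of_notMem hs]
      exact Finset.sum_le_sum fun t _ => mul_le_mul_of_nonneg_left (ih _ _) ((hg _).1 t)

theorem chainReachK_append (k : ℕ) (h₀ h : List (S × A)) (s : S) :
    chainReachK f T g k (h₀ ++ h) s = chainReachK f T (fun p => g (h₀ ++ p.1, p.2)) k h s := by
  induction k generalizing h s with
  | zero => simp [chainReachK]
  | succ k ih =>
    by_cases hs : s ∈ T
    · simp [chainReachK_of_mem hs]
    · simp only [chainReachK_succ_of_notMem hs, List.append_assoc, ih]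

theorem continuous_chainReachK (k : ℕ) (h : List (S × A)) (s : S) :
    Continuous fun g : List (S × A) × S → S → ℝ => chainReachK f T g k h s := by
  induction k generalizing h s with
  | zero => exact continuous_const
  | succ k ih =>
    by_cases hs : s ∈ T
    · simp only [chainReachK_of_mem hs]; exact continuous_const
    · simp only [chainReachK_succ_of_notMem hs]
      exact continuous_finsetSum _ fun t _ => (continuous_apply_apply (h, s) t).mul (ih _ _)

/-- Failing to reach `T` within `n + k` steps requires failing within the first `n` steps and
then within the next `k`. -/
theorem one_sub_chainReachK_add_le (hg : IsProbFamily g) {k : ℕ} {c : ℝ}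
    (hk : ∀ h s, 1 - chainReachK f T g k h s ≤ c) (n : ℕ) (h : List (S × A)) (s : S) :
    1 - chainReachK f T g (n + k) h s ≤ (1 - chainReachK f T g n h s) * c := by
  induction n generalizing h s with
  | zero =>
    by_cases hs : s ∈ T
    · simp [chainReachK_of_mem hs]
    · simpa [chainReachK, hs] using hk h s
  | succ n ih =>
    by_cases hs : s ∈ T
    · simp [chainReachK_of_mem hs]
    · have one_sub (j : ℕ) : 1 - chainReachK f T g (j + 1) h s
          = ∑ t, g (h, s) t * (1 - chainReachK f T g j (h ++ [(s, f s)]) t) := by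
        simp only [chainReachK_succ_of_notMem hs, mul_sub, mul_one, Finset.sum_sub_distrib,
          (hg _).2]
      rw [Nat.add_right_comm, one_sub, one_sub, Finset.sum_mul]
      exact Finset.sum_le_sum fun t _ => by
        rw [mul_assoc]; exact mul_le_mul_of_nonneg_left (ih _ _) ((hg _).1 t)

theorem one_sub_chainReachK_mul_le (hg : IsProbFamily g) {N : ℕ} {q : ℝ} (hq : 0 ≤ q)
    (hN : ∀ h s, 1 - chainReachK f T g N h s ≤ q) (j : ℕ) (h : List (S × A)) (s : S) :
    1 - chainReachK f T g (j * N) h s ≤ q ^ j := by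
  induction j generalizing h s with
  | zero => simpa using chainReachK_nonneg hg 0 h s
  | succ j ih =>
    calc 1 - chainReachK f T g ((j + 1) * N) h s
        = 1 - chainReachK f T g (N + j * N) h s := by rw [add_mul, one_mul, add_comm]
      _ ≤ (1 - chainReachK f T g N h s) * q ^ j :=
        one_sub_chainReachK_add_le hg ih N h s
      _ ≤ q ^ (j + 1) := by
        rw [pow_succ']; exact mul_le_mul_of_nonneg_right (hN h s) (pow_nonneg hq j)

theorem iSup_chainReachK_eq_one (hg : IsProbFamily g) {N : ℕ} {c : ℝ} (hc : 0 < c)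
    (hN : ∀ h s, c ≤ chainReachK f T g N h s) (h : List (S × A)) (s : S) :
    ⨆ k, chainReachK f T g k h s = 1 := by
  have hbdd : BddAbove (range fun k => chainReachK f T g k h s) :=
    ⟨1, forall_mem_range.2 fun k => chainReachK_le_one hg k h s⟩
  have hc1 : c ≤ 1 := (hN h s).trans (chainReachK_le_one hg N h s)
  refine le_antisymm (ciSup_le fun k => chainReachK_le_one hg k h s) ?_
  have hgeom : Tendsto (fun j : ℕ => 1 - (1 - c) ^ j) atTop (𝓝 1) := by
    simpa using
      (tendsto_pow_atTop_nhds_zero_of_lt_one (r := 1 - c) (by linarith) (by linarith)).const_sub 1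
  refine le_of_tendsto' hgeom fun j => ?_
  have := one_sub_chainReachK_mul_le hg (q := 1 - c) (by linarith)
    (fun h s => sub_le_sub_left (hN h s) 1) j h s
  linarith [le_ciSup hbdd (j * N)]

theorem exists_horizon_forall_lt_chainReachK {K : Set (List (S × A) × S → S → ℝ)}
    (hK : IsCompact K) (hprob : ∀ g ∈ K, IsProbFamily g)
    (hshift : ∀ g ∈ K, ∀ h₀ : List (S × A), (fun p => g (h₀ ++ p.1, p.2)) ∈ K) {c : ℝ}
    (hc : ∀ g ∈ K, ∀ s, ∃ k, c < chainReachK f T g k [] s) :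
    ∃ N, ∀ g ∈ K, ∀ h s, c < chainReachK f T g N h s := by
  choose N hN using fun s => hK.exists_forall_lt_of_monotone
    (fun n => continuous_chainReachK n [] s) (fun g hg => chainReachK_monotone (hprob g hg) [] s)
    (fun g hg => hc g hg s)
  refine ⟨Finset.univ.sup N, fun g hg h s => ?_⟩
  rw [← List.append_nil h, chainReachK_append]
  exact (hN s _ (hshift g hg h)).trans_le
    (chainReachK_monotone (hprob _ (hshift g hg h)) [] s (Finset.le_sup (Finset.mem_univ s)))

end Chain

section EnvChoices

variable {S A : Type} [Fintype S] [Fintype A] {M : RMDP S A} {f : S → A}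

def envChoices (M : RMDP S A) (f : S → A) : Set (List (S × A) × S → S → ℝ) :=
  univ.pi fun p => M.P p.2 (f p.2)

theorem isCompact_envChoices (hf : ∀ s, f s ∈ M.Act s) : IsCompact (envChoices M f) :=
  isCompact_univ_pi fun p => M.P_compact _ _ (hf p.2)

theorem envChoices_nonempty (hf : ∀ s, f s ∈ M.Act s) : (envChoices M f).Nonempty :=
  univ_pi_nonempty_iff.2 fun p => M.P_nonempty _ _ (hf p.2)

theorem IsProbFamily.of_mem_envChoices (hf : ∀ s, f s ∈ M.Act s)
    {g : List (S × A) × S → S → ℝ} (hg : g ∈ envChoices M f) : IsProbFamily g :=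
  fun p => M.P_prob p.2 (f p.2) (hf p.2) _ (hg p (mem_univ p))

theorem append_mem_envChoices {g : List (S × A) × S → S → ℝ} (hg : g ∈ envChoices M f)
    (h₀ : List (S × A)) : (fun p : List (S × A) × S => g (h₀ ++ p.1, p.2)) ∈ envChoices M f :=
  fun p _ => hg (h₀ ++ p.1, p.2) (mem_univ _)

theorem EnvPolicy.mem_envChoices (ρ : EnvPolicy M) (hf : ∀ s, f s ∈ M.Act s) :
    (fun p : List (S × A) × S => ρ.toFun p.1 p.2 (f p.2)) ∈ envChoices M f :=
  fun p _ => ρ.mem p.1 p.2 (f p.2) (hf p.2)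

/-- The values at actions other than `f s` are irrelevant to `f`; any admissible ones will do. -/
noncomputable def EnvPolicy.ofEnvChoice (g : List (S × A) × S → S → ℝ)
    (hg : g ∈ envChoices M f) : EnvPolicy M where
  toFun h s a :=
    if a = f s then g (h, s)
    else if ha : a ∈ M.Act s then (M.P_nonempty s a ha).some else fun _ => 0
  mem h s a ha := by
    by_cases he : a = f s
    · subst he
      simpa using hg (h, s) (mem_univ _)
    · simpa only [he, if_false, ha, dif_pos] using (M.P_nonempty s a ha).some_mem

theorem reachK_eq_chainReachK {σ : AgentPolicy M}
    (hσ : ∀ h s a, σ.toFun h s a = if a = f s then 1 else 0) (ρ : EnvPolicy M) (T : Set S)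
    (k : ℕ) (h : List (S × A)) (s : S) :
    reachK M σ ρ T k h s = chainReachK f T (fun p => ρ.toFun p.1 p.2 (f p.2)) k h s := by
  induction k generalizing h s with
  | zero => simp [reachK, chainReachK]
  | succ k ih =>
    by_cases hs : s ∈ T
    · simp [reachK, chainReachK_of_mem hs, hs]
    · simp only [reachK, hs, if_false, chainReachK_succ_of_notMem hs, hσ, ite_mul, one_mul,
        zero_mul, Finset.sum_ite_eq', Finset.mem_univ, if_true, ih]

theorem reachProb_eq_iSup_chainReachK {σ : AgentPolicy M}
    (hσ : ∀ h s a, σ.toFun h s a = if a = f s then 1 else 0) (ρ : EnvPolicy M) (T : Set S)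
    (s : S) :
    reachProb M σ ρ T s = ⨆ k, chainReachK f T (fun p => ρ.toFun p.1 p.2 (f p.2)) k [] s :=
  iSup_congr fun k => reachK_eq_chainReachK hσ ρ T k [] s

theorem reachProb_ofEnvChoice {σ : AgentPolicy M}
    (hσ : ∀ h s a, σ.toFun h s a = if a = f s then 1 else 0)
    {g : List (S × A) × S → S → ℝ} (hg : g ∈ envChoices M f) (T : Set S) (s : S) :
    reachProb M σ (EnvPolicy.ofEnvChoice g hg) T s = ⨆ k, chainReachK f T g k [] s := by
  rw [reachProb_eq_iSup_chainReachK hσ]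
  simp [EnvPolicy.ofEnvChoice]

theorem reachVal_le_reachProb {σ : AgentPolicy M}
    (hσ : ∀ h s a, σ.toFun h s a = if a = f s then 1 else 0) (hf : ∀ s, f s ∈ M.Act s)
    (ρ : EnvPolicy M) (T : Set S) (s : S) : reachVal M σ T s ≤ reachProb M σ ρ T s := by
  refine ciInf_le ⟨0, forall_mem_range.2 fun ρ' => ?_⟩ ρ
  rw [reachProb_eq_iSup_chainReachK hσ]
  exact Real.iSup_nonneg fun k =>
    chainReachK_nonneg (IsProbFamily.of_mem_envChoices hf (ρ'.mem_envChoices hf)) k [] s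

end EnvChoices

theorem stmt4 (M : RMDP S A) (T : Set S) (m : ℝ) (hm : 0 < m)
    (σ : AgentPolicy M) (hσ : σ.PureMemoryless)
    (h : ∀ s : S, m ≤ reachVal M σ T s) :
    ∀ s : S, reachVal M σ T s = 1 := by
  obtain ⟨f, hσf⟩ := hσ
  have hf : ∀ s, f s ∈ M.Act s := fun s => σ.mem_act [] s (f s) (by simp [hσf])
  have hreach : ∀ g ∈ envChoices M f, ∀ s, ∃ k, m / 2 < chainReachK f T g k [] s := by
    intro g hg s
    refine exists_lt_of_lt_ciSup ?_
    rw [← reachProb_ofEnvChoice hσf hg]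
    exact (half_lt_self hm).trans_le ((h s).trans (reachVal_le_reachProb hσf hf _ T s))
  obtain ⟨N, hN⟩ := exists_horizon_forall_lt_chainReachK (isCompact_envChoices hf)
    (fun _ hg => .of_mem_envChoices hf hg) (fun _ hg => append_mem_envChoices hg) hreach
  intro s
  have hone (ρ : EnvPolicy M) : reachProb M σ ρ T s = 1 := by
    rw [reachProb_eq_iSup_chainReachK hσf]
    exact iSup_chainReachK_eq_one (.of_mem_envChoices hf (ρ.mem_envChoices hf)) (half_pos hm)
      (fun h s => (hN _ (ρ.mem_envChoices hf) h s).le) [] s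
  have : Nonempty (EnvPolicy M) := ⟨.ofEnvChoice _ (envChoices_nonempty hf).some_mem⟩
  simp only [reachVal, hone, ciInf_const]
end

section
/- Let M=(S,A,P) be an RMDP, T ⊆ S, σ a pure memoryless agent policy, and s ∈ S a state with Val^{s,σ}_M(Reach(T)) > 0. Then there exists k ∈ ℕ such that Val^{s,σ}_M(Reach_{≤k}(T)) > 0, i.e., there is p > 0 with ℙ^{σ,ρ}_M(s)[Reach_{≤k}(T)] ≥ p for all environment policies ρ. -/
open scoped BigOperators Classical

variable {S A : Type} [Fintype S] [Nonempty S] [Fintype A]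

section Aux

variable (M : RMDP S A)

lemma reachK_nonneg (σ : AgentPolicy M) (ρ : EnvPolicy M) (T : Set S) :
    ∀ k h s, 0 ≤ reachK M σ ρ T k h s := by
  intro k
  induction k with
  | zero => intro h s; simp only [reachK]; split <;> norm_num
  | succ k ih =>
    intro h s
    simp only [reachK]
    split
    · norm_num
    · apply Finset.sum_nonneg
      intro a _
      by_cases ha : a ∈ M.Act s
      · refine mul_nonneg (σ.nonneg h s a) (Finset.sum_nonneg fun t _ => ?_)
        exact mul_nonneg ((M.P_prob s a ha _ (ρ.mem h s a ha)).1 t) (ih _ t)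
      · have : σ.toFun h s a = 0 := by
          by_contra hne; exact ha (σ.mem_act h s a hne)
        simp [this]

lemma reachK_pure (σ : AgentPolicy M) (ρ : EnvPolicy M) (T : Set S) (f : S → A)
    (hf : ∀ h s a, σ.toFun h s a = if a = f s then 1 else 0) (k : ℕ) (h : List (S × A)) (s : S) :
    reachK M σ ρ T (k+1) h s = if s ∈ T then 1
      else ∑ t, ρ.toFun h s (f s) t * reachK M σ ρ T k (h ++ [(s, f s)]) t := by
  simp only [reachK, hf, ite_mul, one_mul, zero_mul, Finset.sum_ite_eq', Finset.mem_univ,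
    if_true]

/-- The Bellman lower-bound sequence. -/
noncomputable def uSeq (T : Set S) (f : S → A) : ℕ → S → ℝ
  | 0 => fun s => if s ∈ T then 1 else 0
  | k + 1 => fun s => if s ∈ T then 1
      else sInf ((fun p : S → ℝ => ∑ t, p t * uSeq T f k t) '' M.P s (f s))

lemma uSeq_nonneg (T : Set S) (f : S → A) (hfa : ∀ s, f s ∈ M.Act s) :
    ∀ k s, 0 ≤ uSeq M T f k s := by
  intro k
  induction k with
  | zero => intro s; simp only [uSeq]; split <;> norm_num
  | succ k ih =>
    intro s
    simp only [uSeq]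
    split
    · norm_num
    · apply le_csInf
      · exact (M.P_nonempty s (f s) (hfa s)).image _
      · rintro x ⟨p, hp, rfl⟩
        exact Finset.sum_nonneg fun t _ =>
          mul_nonneg ((M.P_prob s (f s) (hfa s) p hp).1 t) (ih t)

lemma uSeq_mono (T : Set S) (f : S → A) (hfa : ∀ s, f s ∈ M.Act s) :
    ∀ k s, uSeq M T f k s ≤ uSeq M T f (k+1) s := by
  intro k
  induction k with
  | zero =>
    intro s
    by_cases hT : s ∈ T
    · simp [uSeq, hT]
    · simp only [uSeq, if_neg hT]
      apply le_csInf ((M.P_nonempty s (f s) (hfa s)).image _)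
      rintro x ⟨p, hp, rfl⟩
      exact Finset.sum_nonneg fun t _ =>
        mul_nonneg ((M.P_prob s (f s) (hfa s) p hp).1 t)
          (uSeq_nonneg M T f hfa 0 t)
  | succ k ih =>
    intro s
    by_cases hT : s ∈ T
    · simp [uSeq, hT]
    · simp only [uSeq, if_neg hT]
      apply le_csInf ((M.P_nonempty s (f s) (hfa s)).image _)
      rintro x ⟨p, hp, rfl⟩
      refine le_trans (csInf_le ?_ ⟨p, hp, rfl⟩) ?_
      · exact ⟨0, by
          rintro y ⟨q, hq, rfl⟩
          exact Finset.sum_nonneg fun t _ =>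
            mul_nonneg ((M.P_prob s (f s) (hfa s) q hq).1 t)
              (uSeq_nonneg M T f hfa k t)⟩
      · exact Finset.sum_le_sum fun t _ =>
          mul_le_mul_of_nonneg_left (ih t) ((M.P_prob s (f s) (hfa s) p hp).1 t)

lemma uSeq_le_reachK (T : Set S) (σ : AgentPolicy M) (f : S → A)
    (hf : ∀ h s a, σ.toFun h s a = if a = f s then 1 else 0) (hfa : ∀ s, f s ∈ M.Act s)
    (ρ : EnvPolicy M) : ∀ k h s, uSeq M T f k s ≤ reachK M σ ρ T k h s := by
  intro k
  induction k with
  | zero => intro h s; simp [uSeq, reachK]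
  | succ k ih =>
    intro h s
    rw [reachK_pure M σ ρ T f hf]
    by_cases hT : s ∈ T
    · simp [uSeq, hT]
    · simp only [uSeq, if_neg hT]
      set p := ρ.toFun h s (f s) with hpdef
      have hpP : p ∈ M.P s (f s) := ρ.mem h s (f s) (hfa s)
      refine le_trans (csInf_le ?_ ⟨p, hpP, rfl⟩) ?_
      · exact ⟨0, by
          rintro y ⟨q, hq, rfl⟩
          exact Finset.sum_nonneg fun t _ =>
            mul_nonneg ((M.P_prob s (f s) (hfa s) q hq).1 t)
              (uSeq_nonneg M T f hfa k t)⟩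
      · exact Finset.sum_le_sum fun t _ =>
          mul_le_mul_of_nonneg_left (ih _ t) ((M.P_prob s (f s) (hfa s) p hpP).1 t)

end Aux

theorem stmt5 (M : RMDP S A) (T : Set S) (σ : AgentPolicy M) (hσ : σ.PureMemoryless)
    (s : S) (h : 0 < reachVal M σ T s) :
    ∃ k : ℕ, ∃ p : ℝ, 0 < p ∧ ∀ ρ : EnvPolicy M, p ≤ reachK M σ ρ T k [] s := by
  obtain ⟨f, hf⟩ := hσ
  have hfa : ∀ s, f s ∈ M.Act s := by
    intro t
    refine σ.mem_act [] t (f t) ?_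
    rw [hf]; simp
  by_cases hpos : ∃ K, 0 < uSeq M T f K s
  · obtain ⟨K, hK⟩ := hpos
    exact ⟨K, uSeq M T f K s, hK, fun ρ => uSeq_le_reachK M T σ f hf hfa ρ K [] s⟩
  -- otherwise uSeq is identically 0 at s; derive contradiction with h
  exfalso
  push_neg at hpos
  set Z : Set S := {t | ∀ k, uSeq M T f k t = 0} with hZdef
  have hsZ : s ∈ Z := fun k => le_antisymm (hpos k) (uSeq_nonneg M T f hfa k s)
  have hZT : ∀ t ∈ Z, t ∉ T := by
    intro t ht hT
    have := ht 0
    simp [uSeq, hT] at this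
  -- continuity of the linear functionals
  have hcont : ∀ k, Continuous fun p : S → ℝ => ∑ t, p t * uSeq M T f k t := by
    intro k
    exact continuous_finset_sum _ fun t _ => (continuous_apply t).mul continuous_const
  -- for each t ∈ Z find a single distribution keeping all levels at 0
  have hchoice : ∀ t, ∃ p : S → ℝ, t ∈ Z →
      p ∈ M.P t (f t) ∧ ∀ k, ∑ x, p x * uSeq M T f k x = 0 := by
    intro t
    by_cases ht : t ∈ Z
    · set C : ℕ → Set (S → ℝ) :=
        fun k => {p ∈ M.P t (f t) | ∑ x, p x * uSeq M T f k x ≤ 0} with hCdef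
      have hCsub : ∀ k, C (k+1) ⊆ C k := by
        rintro k p ⟨hp, hle⟩
        refine ⟨hp, le_trans (Finset.sum_le_sum fun x _ =>
          mul_le_mul_of_nonneg_left (uSeq_mono M T f hfa k x)
            ((M.P_prob t (f t) (hfa t) p hp).1 x)) hle⟩
      have hCne : ∀ k, (C k).Nonempty := by
        intro k
        obtain ⟨p₀, hp₀, hmin⟩ := (M.P_compact t (f t) (hfa t)).exists_isMinOn
          (M.P_nonempty t (f t) (hfa t)) (hcont k).continuousOn
        have hinf : sInf ((fun p : S → ℝ => ∑ x, p x * uSeq M T f k x) '' M.P t (f t))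
            = ∑ x, p₀ x * uSeq M T f k x := by
          refine IsLeast.csInf_eq ⟨Set.mem_image_of_mem _ hp₀, ?_⟩
          rintro y ⟨q, hq, rfl⟩
          exact hmin hq
        have h0 : uSeq M T f (k+1) t = 0 := ht (k+1)
        rw [show uSeq M T f (k+1) t = sInf ((fun p : S → ℝ =>
            ∑ x, p x * uSeq M T f k x) '' M.P t (f t)) by
          simp [uSeq, hZT t ht]] at h0
        exact ⟨p₀, hp₀, by rw [← hinf, h0]⟩
      have hCclosed : ∀ k, IsClosed (C k) := by
        intro k
        exact ((M.P_compact t (f t) (hfa t)).isClosed).inter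
          (isClosed_le (hcont k) continuous_const)
      have hC0 : IsCompact (C 0) :=
        (M.P_compact t (f t) (hfa t)).inter_right
          (isClosed_le (hcont 0) continuous_const)
      obtain ⟨p, hp⟩ := IsCompact.nonempty_iInter_of_sequence_nonempty_isCompact_isClosed
        C hCsub hCne hC0 hCclosed
      simp only [Set.mem_iInter] at hp
      refine ⟨p, fun _ => ⟨(hp 0).1, fun k => le_antisymm (hp k).2 ?_⟩⟩
      exact Finset.sum_nonneg fun x _ =>
        mul_nonneg ((M.P_prob t (f t) (hfa t) p (hp 0).1).1 x) (uSeq_nonneg M T f hfa k x)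
    · exact ⟨0, fun hc => absurd hc ht⟩
  choose pt hpt using hchoice
  -- build the environment policy
  set ρ0 : EnvPolicy M :=
    { toFun := fun _ t a => if ha : a ∈ M.Act t then
        (if t ∈ Z ∧ a = f t then pt t else (M.P_nonempty t a ha).choose) else 0
      mem := by
        intro h' t a ha
        simp only [dif_pos ha]
        by_cases hZa : t ∈ Z ∧ a = f t
        · rw [if_pos hZa, hZa.2]
          exact (hpt t hZa.1).1
        · rw [if_neg hZa]
          exact (M.P_nonempty t a ha).choose_spec } with hρ0def
  -- from Z, reachK is 0 forever
  have hE : ∀ k (h' : List (S × A)) t, t ∈ Z → reachK M σ ρ0 T k h' t = 0 := by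
    intro k
    induction k with
    | zero => intro h' t ht; simp [reachK, hZT t ht]
    | succ k ih =>
      intro h' t ht
      rw [reachK_pure M σ ρ0 T f hf, if_neg (hZT t ht)]
      have hρval : ρ0.toFun h' t (f t) = pt t := by
        simp [hρ0def, hfa t, ht]
      rw [hρval]
      apply Finset.sum_eq_zero
      intro x _
      by_cases hx : pt t x = 0
      · rw [hx, zero_mul]
      · have hxZ : x ∈ Z := by
          intro k'
          have hsum := (hpt t ht).2 k'
          have hnn : ∀ y ∈ (Finset.univ : Finset S), 0 ≤ pt t y * uSeq M T f k' y :=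
            fun y _ => mul_nonneg ((M.P_prob t (f t) (hfa t) _ (hpt t ht).1).1 y)
              (uSeq_nonneg M T f hfa k' y)
          have := (Finset.sum_eq_zero_iff_of_nonneg hnn).1 hsum x (Finset.mem_univ x)
          rcases mul_eq_zero.1 this with h1 | h2
          · exact absurd h1 hx
          · exact h2
        rw [ih _ x hxZ, mul_zero]
  -- hence reachProb under ρ0 is 0, contradicting reachVal > 0
  have hprob : reachProb M σ ρ0 T s = 0 := by
    unfold reachProb
    have : (fun k => reachK M σ ρ0 T k [] s) = fun _ => (0:ℝ) :=
      funext fun k => hE k [] s hsZ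
    rw [this, ciSup_const]
  have hle : reachVal M σ T s ≤ reachProb M σ ρ0 T s := by
    refine ciInf_le ⟨0, ?_⟩ ρ0
    rintro x ⟨ρ, rfl⟩
    exact Real.iSup_nonneg fun k => reachK_nonneg M σ ρ T k [] s
  rw [hprob] at hle
  exact absurd (lt_of_lt_of_le h hle) (lt_irrefl 0)
end

section
/- Let M=(S,A,P) be an RMDP and T ⊆ S a target set. There exists a pure memoryless agent policy σ* such that for all states s ∈ S: Val^{s}_M(Reach(T)) = 1 if and only if Val^{s,σ*}_M(Reach(T)) = 1. In particular, for reachability objectives the limit-sure and almost-sure analysis problems coincide. -/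
open scoped BigOperators Classical

variable {S A : Type} [Fintype S] [Nonempty S] [Fintype A]

namespace Stmt7Aux

variable {S A : Type} [Fintype S] [Nonempty S] [Fintype A]

/-- mass of `p` on `B` -/
noncomputable def psum (p : S → ℝ) (B : Set S) : ℝ := ∑ t, if t ∈ B then p t else 0

lemma psum_nonneg {p : S → ℝ} (hp : ∀ t, 0 ≤ p t) (B : Set S) : 0 ≤ psum p B :=
  Finset.sum_nonneg fun t _ => by by_cases h : t ∈ B <;> simp [h, hp t]

lemma psum_pos {p : S → ℝ} (hp : ∀ t, 0 ≤ p t) {B : Set S} {t₀ : S}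
    (ht : t₀ ∈ B) (hne : p t₀ ≠ 0) : 0 < psum p B := by
  have h1 : (0:ℝ) < (if t₀ ∈ B then p t₀ else 0) := by
    simp only [ht, if_true]
    exact lt_of_le_of_ne (hp t₀) (Ne.symm hne)
  have h2 : (if t₀ ∈ B then p t₀ else 0) ≤ psum p B := by
    apply Finset.single_le_sum (f := fun t => if t ∈ B then p t else 0)
    · intro t _; by_cases h : t ∈ B <;> simp [h, hp t]
    · exact Finset.mem_univ t₀
  linarith

lemma psum_zero_forall {p : S → ℝ} (hp : ∀ t, 0 ≤ p t) {B : Set S}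
    (h : ¬ 0 < psum p B) : ∀ t ∈ B, p t = 0 := by
  intro t ht
  by_contra hne
  exact h (psum_pos hp ht hne)

lemma psum_mono {p : S → ℝ} (hp : ∀ t, 0 ≤ p t) {B B' : Set S} (hBB : B ⊆ B') :
    psum p B ≤ psum p B' := by
  apply Finset.sum_le_sum
  intro t _
  by_cases h : t ∈ B
  · simp [h, hBB h]
  · by_cases h' : t ∈ B' <;> simp [h, h', hp t]

lemma split_ge (p r : S → ℝ) (B Wst : Set S)
    (hp0 : ∀ t, 0 ≤ p t) (hp1 : ∑ t, p t = 1)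
    (hsupp : ∀ t, p t ≠ 0 → t ∈ Wst) (x y : ℝ) (hxy : y ≤ x)
    (hB : ∀ t ∈ B, x ≤ r t) (hW : ∀ t ∈ Wst, y ≤ r t) :
    y + (x - y) * psum p B ≤ ∑ t, p t * r t := by
  have key : ∑ t, (if t ∈ B then p t else 0) * (x - y) ≤ ∑ t, p t * (r t - y) := by
    apply Finset.sum_le_sum
    intro t _
    by_cases hpt : p t = 0
    · simp [hpt]
    · by_cases htB : t ∈ B
      · simp only [htB, if_true]
        exact mul_le_mul_of_nonneg_left (by linarith [hB t htB]) (hp0 t)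
      · simp only [htB, if_false, zero_mul]
        exact mul_nonneg (hp0 t) (by linarith [hW t (hsupp t hpt)])
  have e1 : ∑ t, (if t ∈ B then p t else 0) * (x - y) = psum p B * (x - y) := by
    rw [psum, ← Finset.sum_mul]
  have e2 : ∑ t, p t * (r t - y) = (∑ t, p t * r t) - y := by
    simp only [mul_sub]
    rw [Finset.sum_sub_distrib, ← Finset.sum_mul, hp1, one_mul]
  rw [e1, e2] at key
  linarith

lemma split_le (p r : S → ℝ) (B : Set S)
    (hp0 : ∀ t, 0 ≤ p t) (hp1 : ∑ t, p t = 1)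
    (x : ℝ) (hx : x ≤ 1) (hB : ∀ t ∈ B, r t ≤ x) (hr1 : ∀ t, r t ≤ 1) :
    ∑ t, p t * r t ≤ 1 - (1 - x) * psum p B := by
  have key : ∑ t, (if t ∈ B then p t else 0) * (1 - x) ≤ ∑ t, p t * (1 - r t) := by
    apply Finset.sum_le_sum
    intro t _
    by_cases htB : t ∈ B
    · simp only [htB, if_true]
      exact mul_le_mul_of_nonneg_left (by linarith [hB t htB]) (hp0 t)
    · simp only [htB, if_false, zero_mul]
      exact mul_nonneg (hp0 t) (by linarith [hr1 t])
  have e1 : ∑ t, (if t ∈ B then p t else 0) * (1 - x) = psum p B * (1 - x) := by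
    rw [psum, ← Finset.sum_mul]
  have e2 : ∑ t, p t * (1 - r t) = 1 - ∑ t, p t * r t := by
    simp only [mul_sub, mul_one]
    rw [Finset.sum_sub_distrib, hp1]
  rw [e1, e2] at key
  linarith

lemma stay_le (p r : S → ℝ) (C : Set S)
    (hp0 : ∀ t, 0 ≤ p t) (hp1 : ∑ t, p t = 1)
    (x : ℝ) (hsupp : ∀ t, p t ≠ 0 → t ∈ C) (hC : ∀ t ∈ C, r t ≤ x) :
    ∑ t, p t * r t ≤ x := by
  have key : ∑ t, p t * r t ≤ ∑ t, p t * x := by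
    apply Finset.sum_le_sum
    intro t _
    by_cases hpt : p t = 0
    · simp [hpt]
    · exact mul_le_mul_of_nonneg_left (hC t (hsupp t hpt)) (hp0 t)
  calc ∑ t, p t * r t ≤ ∑ t, p t * x := key
    _ = x := by rw [← Finset.sum_mul, hp1, one_mul]

end Stmt7Aux

set_option linter.unusedSectionVars false
set_option linter.unusedVariables false

namespace Stmt7Aux

variable {S A : Type} [Fintype S] [Nonempty S] [Fintype A]

noncomputable def pureOf (M : RMDP S A) (f : S → A) (hf : ∀ s, f s ∈ M.Act s) :
    AgentPolicy M where
  toFun := fun _ s a => if a = f s then 1 else 0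
  nonneg := by intro h s a; by_cases hh : a = f s <;> simp [hh]
  sum_one := by intro h s; simp
  mem_act := by
    intro h s a ha
    by_cases hh : a = f s
    · subst hh; exact hf s
    · simp [hh] at ha

lemma pureOf_pm (M : RMDP S A) (f : S → A) (hf : ∀ s, f s ∈ M.Act s) :
    (pureOf M f hf).PureMemoryless := ⟨f, fun _ _ _ => rfl⟩

noncomputable def envOf (M : RMDP S A) (g : S → A → S → ℝ)
    (hg : ∀ s a, a ∈ M.Act s → g s a ∈ M.P s a) : EnvPolicy M where
  toFun := fun _ => g
  mem := fun _ s a ha => hg s a ha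

noncomputable def defaultAgent (M : RMDP S A) : AgentPolicy M :=
  pureOf M (fun s => (M.Act_nonempty s).choose) (fun s => (M.Act_nonempty s).choose_spec)

noncomputable def defaultEnv (M : RMDP S A) : EnvPolicy M :=
  envOf M (fun s a => if h : a ∈ M.Act s then (M.P_nonempty s a h).choose else fun _ => 0)
    (fun s a ha => by simp only [ha, dif_pos]; exact (M.P_nonempty s a ha).choose_spec)

instance (M : RMDP S A) : Nonempty (AgentPolicy M) := ⟨defaultAgent M⟩
instance (M : RMDP S A) : Nonempty (EnvPolicy M) := ⟨defaultEnv M⟩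

lemma agent_zero {M : RMDP S A} (σ : AgentPolicy M) {h s a} (ha : a ∉ M.Act s) :
    σ.toFun h s a = 0 := by
  by_contra hne; exact ha (σ.mem_act h s a hne)

lemma reachK_zero (M : RMDP S A) (σ : AgentPolicy M) (ρ : EnvPolicy M) (T : Set S) (h s) :
    reachK M σ ρ T 0 h s = if s ∈ T then 1 else 0 := rfl

lemma reachK_succ (M : RMDP S A) (σ : AgentPolicy M) (ρ : EnvPolicy M) (T : Set S) (k h s) :
    reachK M σ ρ T (k+1) h s = if s ∈ T then 1
      else ∑ a, σ.toFun h s a * ∑ t, ρ.toFun h s a t * reachK M σ ρ T k (h ++ [(s, a)]) t := rfl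

lemma reachK_target (M : RMDP S A) (σ : AgentPolicy M) (ρ : EnvPolicy M) {T : Set S}
    (k : ℕ) (h : List (S × A)) {s : S} (hs : s ∈ T) : reachK M σ ρ T k h s = 1 := by
  cases k <;> simp [reachK_zero, reachK_succ, hs]

lemma sum_policy_le {M : RMDP S A} (σ : AgentPolicy M) (h : List (S × A)) (s : S)
    (c : A → ℝ) (x : ℝ) (hx : 0 ≤ x) (hc : ∀ a ∈ M.Act s, c a ≤ x) :
    ∑ a, σ.toFun h s a * c a ≤ x := by
  calc ∑ a, σ.toFun h s a * c a ≤ ∑ a, σ.toFun h s a * x := by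
        apply Finset.sum_le_sum
        intro a _
        by_cases ha : a ∈ M.Act s
        · exact mul_le_mul_of_nonneg_left (hc a ha) (σ.nonneg h s a)
        · simp [agent_zero σ ha]
    _ = x := by rw [← Finset.sum_mul, σ.sum_one, one_mul]

lemma sum_policy_ge {M : RMDP S A} (σ : AgentPolicy M) (h : List (S × A)) (s : S)
    (c : A → ℝ) (x : ℝ) (hx : x ≤ 0) (hc : ∀ a ∈ M.Act s, x ≤ c a) :
    x ≤ ∑ a, σ.toFun h s a * c a := by
  calc x = ∑ a, σ.toFun h s a * x := by rw [← Finset.sum_mul, σ.sum_one, one_mul]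
    _ ≤ ∑ a, σ.toFun h s a * c a := by
        apply Finset.sum_le_sum
        intro a _
        by_cases ha : a ∈ M.Act s
        · exact mul_le_mul_of_nonneg_left (hc a ha) (σ.nonneg h s a)
        · simp [agent_zero σ ha]

lemma reachK_nonneg (M : RMDP S A) (σ : AgentPolicy M) (ρ : EnvPolicy M) (T : Set S) :
    ∀ k h s, 0 ≤ reachK M σ ρ T k h s := by
  intro k
  induction k with
  | zero => intro h s; rw [reachK_zero]; split <;> norm_num
  | succ k ih =>
    intro h s
    rw [reachK_succ]
    split
    · norm_num
    · apply sum_policy_ge σ h s _ 0 le_rfl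
      intro a ha
      have hp := M.P_prob s a ha _ (ρ.mem h s a ha)
      exact Finset.sum_nonneg fun t _ => mul_nonneg (hp.1 t) (ih _ t)

lemma reachK_le_one (M : RMDP S A) (σ : AgentPolicy M) (ρ : EnvPolicy M) (T : Set S) :
    ∀ k h s, reachK M σ ρ T k h s ≤ 1 := by
  intro k
  induction k with
  | zero => intro h s; rw [reachK_zero]; split <;> norm_num
  | succ k ih =>
    intro h s
    rw [reachK_succ]
    split
    · norm_num
    · apply sum_policy_le σ h s _ 1 zero_le_one
      intro a ha
      have hp := M.P_prob s a ha _ (ρ.mem h s a ha)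
      calc ∑ t, ρ.toFun h s a t * reachK M σ ρ T k (h ++ [(s,a)]) t
          ≤ ∑ t, ρ.toFun h s a t * 1 := by
            apply Finset.sum_le_sum
            intro t _
            exact mul_le_mul_of_nonneg_left (ih _ t) (hp.1 t)
        _ = 1 := by simp [hp.2]

lemma bddAbove_reachK (M : RMDP S A) (σ : AgentPolicy M) (ρ : EnvPolicy M) (T : Set S) (s : S) :
    BddAbove (Set.range fun k => reachK M σ ρ T k [] s) := by
  refine ⟨1, ?_⟩
  rintro _ ⟨k, rfl⟩
  exact reachK_le_one M σ ρ T k [] s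

lemma reachProb_le_one (M : RMDP S A) (σ : AgentPolicy M) (ρ : EnvPolicy M) (T : Set S) (s : S) :
    reachProb M σ ρ T s ≤ 1 :=
  ciSup_le fun k => reachK_le_one M σ ρ T k [] s

lemma reachProb_nonneg (M : RMDP S A) (σ : AgentPolicy M) (ρ : EnvPolicy M) (T : Set S) (s : S) :
    0 ≤ reachProb M σ ρ T s :=
  (reachK_nonneg M σ ρ T 0 [] s).trans (le_ciSup (bddAbove_reachK M σ ρ T s) 0)

lemma reachK_le_reachProb (M : RMDP S A) (σ : AgentPolicy M) (ρ : EnvPolicy M) (T : Set S)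
    (k : ℕ) (s : S) : reachK M σ ρ T k [] s ≤ reachProb M σ ρ T s :=
  le_ciSup (bddAbove_reachK M σ ρ T s) k

lemma bddBelow_reachProb (M : RMDP S A) (σ : AgentPolicy M) (T : Set S) (s : S) :
    BddBelow (Set.range fun ρ : EnvPolicy M => reachProb M σ ρ T s) := by
  refine ⟨0, ?_⟩
  rintro _ ⟨ρ, rfl⟩
  exact reachProb_nonneg M σ ρ T s

lemma reachVal_le_reachProb (M : RMDP S A) (σ : AgentPolicy M) (ρ : EnvPolicy M)
    (T : Set S) (s : S) : reachVal M σ T s ≤ reachProb M σ ρ T s :=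
  ciInf_le (bddBelow_reachProb M σ T s) ρ

lemma reachVal_le_one (M : RMDP S A) (σ : AgentPolicy M) (T : Set S) (s : S) :
    reachVal M σ T s ≤ 1 :=
  (reachVal_le_reachProb M σ (defaultEnv M) T s).trans (reachProb_le_one M σ _ T s)

lemma reachVal_le_sup (M : RMDP S A) (σ : AgentPolicy M) (T : Set S) (s : S) :
    reachVal M σ T s ≤ reachValSup M T s := by
  apply le_ciSup (f := fun σ : AgentPolicy M => reachVal M σ T s)
  · refine ⟨1, ?_⟩
    rintro _ ⟨σ', rfl⟩
    exact reachVal_le_one M σ' T s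

lemma reachValSup_le_one (M : RMDP S A) (T : Set S) (s : S) :
    reachValSup M T s ≤ 1 :=
  ciSup_le fun σ => reachVal_le_one M σ T s

end Stmt7Aux

namespace Stmt7Aux

variable {S A : Type} [Fintype S] [Nonempty S] [Fintype A]

/-- all distributions from `P s a` are supported inside `X` -/
def safeAct (M : RMDP S A) (X : Set S) (s : S) (a : A) : Prop :=
  ∀ p ∈ M.P s a, ∀ t, p t ≠ 0 → t ∈ X

/-- inner least-fixpoint iteration: attractor to `T` with safety `X` -/
def innerSeq (M : RMDP S A) (T : Set S) (X : Set S) : ℕ → Set S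
  | 0 => T
  | i + 1 => innerSeq M T X i ∪
      {s | ∃ a ∈ M.Act s, safeAct M X s a ∧
        ∀ p ∈ M.P s a, 0 < psum p (innerSeq M T X i)}

def Phi (M : RMDP S A) (T : Set S) (X : Set S) : Set S := ⋃ i, innerSeq M T X i

def outerSeq (M : RMDP S A) (T : Set S) : ℕ → Set S
  | 0 => Set.univ
  | j + 1 => Phi M T (outerSeq M T j)

lemma innerSeq_subset_succ (M : RMDP S A) (T X : Set S) (i : ℕ) :
    innerSeq M T X i ⊆ innerSeq M T X (i+1) := Set.subset_union_left

lemma innerSeq_mono (M : RMDP S A) (T X : Set S) : Monotone (innerSeq M T X) :=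
  monotone_nat_of_le_succ (innerSeq_subset_succ M T X)

lemma target_subset_innerSeq (M : RMDP S A) (T X : Set S) (i : ℕ) :
    T ⊆ innerSeq M T X i := innerSeq_mono M T X (Nat.zero_le i)

lemma innerSeq_subset_Phi (M : RMDP S A) (T X : Set S) (i : ℕ) :
    innerSeq M T X i ⊆ Phi M T X := Set.subset_iUnion _ i

lemma target_subset_Phi (M : RMDP S A) (T X : Set S) : T ⊆ Phi M T X :=
  (target_subset_innerSeq M T X 0).trans (innerSeq_subset_Phi M T X 0)

lemma innerSeq_mono_X (M : RMDP S A) (T : Set S) {X X' : Set S} (hXX : X ⊆ X') (i : ℕ) :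
    innerSeq M T X i ⊆ innerSeq M T X' i := by
  induction i with
  | zero => exact le_rfl
  | succ i ih =>
    intro s hs
    rcases hs with hs | hs
    · exact Or.inl (ih hs)
    · right
      obtain ⟨a, ha, hsafe, hprog⟩ := hs
      refine ⟨a, ha, fun p hp t ht => hXX (hsafe p hp t ht), fun p hp => ?_⟩
      have hp0 := (M.P_prob s a ha p hp).1
      exact lt_of_lt_of_le (hprog p hp) (psum_mono hp0 ih)

lemma Phi_mono (M : RMDP S A) (T : Set S) {X X' : Set S} (hXX : X ⊆ X') :
    Phi M T X ⊆ Phi M T X' :=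
  Set.iUnion_mono fun i => innerSeq_mono_X M T hXX i

lemma outerSeq_antitone (M : RMDP S A) (T : Set S) : Antitone (outerSeq M T) := by
  apply antitone_nat_of_succ_le
  intro j
  induction j with
  | zero => exact Set.subset_univ _
  | succ j ih => exact Phi_mono M T ih

lemma target_subset_outerSeq (M : RMDP S A) (T : Set S) (j : ℕ) :
    T ⊆ outerSeq M T j := by
  cases j with
  | zero => exact Set.subset_univ _
  | succ j => exact target_subset_Phi M T _

/-- stabilization for monotone sequences of sets in a fintype -/
lemma exists_stab_mono (g : ℕ → Set S) (hg : ∀ i, g i ⊆ g (i+1)) :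
    ∃ j ≤ Fintype.card S, g (j+1) = g j := by
  by_contra hcon
  push_neg at hcon
  have hss : ∀ j ≤ Fintype.card S, g j ⊂ g (j+1) := fun j hj =>
    ssubset_of_subset_of_ne (hg j) (Ne.symm (hcon j hj))
  have hcard : ∀ j ≤ Fintype.card S + 1, j ≤ (g j).ncard := by
    intro j hj
    induction j with
    | zero => exact Nat.zero_le _
    | succ j ih =>
      have h1 : j ≤ (g j).ncard := ih (by omega)
      have h2 : (g j).ncard < (g (j+1)).ncard :=
        Set.ncard_lt_ncard (hss j (by omega)) (Set.toFinite _)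
      omega
  have h3 : (g (Fintype.card S + 1)).ncard ≤ Fintype.card S := by
    have := Set.ncard_le_ncard (Set.subset_univ (g (Fintype.card S + 1))) (Set.toFinite _)
    rwa [Set.ncard_univ, Nat.card_eq_fintype_card] at this
  have := hcard (Fintype.card S + 1) le_rfl
  omega

lemma stab_forever {g : ℕ → Set S} {F : Set S → Set S}
    (hstep : ∀ i, g (i+1) = F (g i)) {j : ℕ} (hj : g (j+1) = g j) :
    ∀ m, j ≤ m → g m = g j := by
  intro m hm
  induction m with
  | zero =>
    have : j = 0 := Nat.le_zero.mp hm
    subst this; rfl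
  | succ m ih =>
    rcases Nat.lt_or_ge j (m+1) with h | h
    · have hjm : j ≤ m := by omega
      rw [hstep m, ih hjm, ← hstep j, hj]
    · have : j = m + 1 := by omega
      subst this; rfl

end Stmt7Aux

namespace Stmt7Aux

variable {S A : Type} [Fintype S] [Nonempty S] [Fintype A]

def Wgood (M : RMDP S A) (T : Set S) : Set S := outerSeq M T (Fintype.card S + 1)

lemma exists_outer_stab (M : RMDP S A) (T : Set S) :
    ∃ j ≤ Fintype.card S, outerSeq M T (j+1) = outerSeq M T j := by
  obtain ⟨j, hj, hfix⟩ := exists_stab_mono (fun i => (outerSeq M T i)ᶜ)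
    (fun i => Set.compl_subset_compl.mpr (outerSeq_antitone M T (Nat.le_succ i)))
  exact ⟨j, hj, by simpa using congrArg compl hfix⟩

lemma outer_forever (M : RMDP S A) (T : Set S) {j : ℕ}
    (hfix : outerSeq M T (j+1) = outerSeq M T j) :
    ∀ m, j ≤ m → outerSeq M T m = outerSeq M T j :=
  stab_forever (F := Phi M T) (fun i => rfl) hfix

lemma Wgood_subset_outer (M : RMDP S A) (T : Set S) (j : ℕ) :
    Wgood M T ⊆ outerSeq M T j := by
  obtain ⟨j0, hj0, hfix⟩ := exists_outer_stab M T
  have hall := outer_forever M T hfix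
  have hW : Wgood M T = outerSeq M T j0 := hall _ (by omega)
  rcases le_or_gt j j0 with h | h
  · rw [hW]; exact outerSeq_antitone M T h
  · rw [hW, ← hall j (by omega)]

lemma Phi_Wgood (M : RMDP S A) (T : Set S) : Phi M T (Wgood M T) = Wgood M T := by
  obtain ⟨j0, hj0, hfix⟩ := exists_outer_stab M T
  have hall := outer_forever M T hfix
  have hW : Wgood M T = outerSeq M T j0 := hall _ (by omega)
  rw [hW]
  exact hfix

lemma target_subset_Wgood (M : RMDP S A) (T : Set S) : T ⊆ Wgood M T :=
  target_subset_outerSeq M T _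

lemma exists_inner_eq_Phi (M : RMDP S A) (T X : Set S) :
    ∃ i, innerSeq M T X i = Phi M T X ∧ innerSeq M T X (i+1) = innerSeq M T X i := by
  obtain ⟨i, _, hfix⟩ := exists_stab_mono (innerSeq M T X) (innerSeq_subset_succ M T X)
  have hall : ∀ m, i ≤ m → innerSeq M T X m = innerSeq M T X i := by
    apply stab_forever (F := fun Y => Y ∪
      {s | ∃ a ∈ M.Act s, safeAct M X s a ∧ ∀ p ∈ M.P s a, 0 < psum p Y}) (fun k => rfl) hfix
  refine ⟨i, ?_, hfix⟩
  apply Set.Subset.antisymm (innerSeq_subset_Phi M T X i)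
  apply Set.iUnion_subset
  intro m
  rcases le_or_gt m i with h | h
  · exact innerSeq_mono M T X h
  · rw [hall m (by omega)]

lemma notMem_Phi (M : RMDP S A) (T : Set S) {X : Set S} {s : S} (hs : s ∉ Phi M T X) :
    s ∉ T ∧ ∀ a ∈ M.Act s,
      (∃ p ∈ M.P s a, 0 < psum p Xᶜ) ∨ (∃ p ∈ M.P s a, ∀ t ∈ Phi M T X, p t = 0) := by
  refine ⟨fun h => hs (target_subset_Phi M T X h), ?_⟩
  intro a ha
  by_contra hcon
  push_neg at hcon
  obtain ⟨hc1, hc2⟩ := hcon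
  obtain ⟨i, hiPhi, hifix⟩ := exists_inner_eq_Phi M T X
  apply hs
  have hmem : s ∈ innerSeq M T X (i+1) := by
    right
    refine ⟨a, ha, ?_, ?_⟩
    · intro p hp t ht
      by_contra htX
      have hp0 := (M.P_prob s a ha p hp).1
      exact (hc1 p hp).not_gt (psum_pos hp0 htX ht)
    · intro p hp
      obtain ⟨t, htPhi, htne⟩ := hc2 p hp
      have hp0 := (M.P_prob s a ha p hp).1
      exact psum_pos hp0 (by rwa [hiPhi]) htne
  exact innerSeq_subset_Phi M T X (i+1) hmem

lemma psum_continuous (B : Set S) : Continuous fun p : S → ℝ => psum p B := by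
  unfold psum
  apply continuous_finset_sum
  intro t _
  by_cases h : t ∈ B
  · simp only [if_pos h]
    exact continuous_apply t
  · simp only [if_neg h]
    exact continuous_const

lemma exists_pos_lb (M : RMDP S A) {s : S} {a : A} (ha : a ∈ M.Act s) (B : Set S)
    (hpos : ∀ p ∈ M.P s a, 0 < psum p B) :
    ∃ δ, 0 < δ ∧ ∀ p ∈ M.P s a, δ ≤ psum p B := by
  obtain ⟨p₀, hp₀, hmin⟩ := (M.P_compact s a ha).exists_isMinOn (M.P_nonempty s a ha)
    ((psum_continuous B).continuousOn)
  exact ⟨psum p₀ B, hpos p₀ hp₀, fun p hp => hmin hp⟩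

end Stmt7Aux

namespace Stmt7Aux

variable {S A : Type} [Fintype S] [Nonempty S] [Fintype A]

lemma pow_anti {δ : ℝ} (h0 : 0 ≤ δ) (h1 : δ ≤ 1) {n m : ℕ} (h : n ≤ m) : δ ^ m ≤ δ ^ n :=
  Bound.pow_le_pow_right_of_le_one_or_one_le (Or.inr ⟨h0, h1, h⟩)

lemma env_main (M : RMDP S A) (T : Set S) (g : S → A → S → ℝ)
    (hg : ∀ s a, a ∈ M.Act s → g s a ∈ M.P s a)
    (δ : ℝ) (hδ0 : 0 < δ) (hδ1 : δ ≤ 1) (lvl : S → ℕ)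
    (hlvl : ∀ s, s ∉ Wgood M T → s ∈ outerSeq M T (lvl s) ∧ s ∉ outerSeq M T (lvl s + 1))
    (hprop : ∀ s a, s ∉ Wgood M T → a ∈ M.Act s →
      (δ ≤ psum (g s a) (outerSeq M T (lvl s))ᶜ) ∨
      (∀ t ∈ outerSeq M T (lvl s + 1), g s a t = 0)) :
    ∀ (k : ℕ) (σ : AgentPolicy M) (h : List (S × A)) (j : ℕ) (s : S),
      s ∉ outerSeq M T j →
      reachK M σ (envOf M g hg) T k h s ≤ 1 - δ ^ j := by
  intro k
  induction k with
  | zero =>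
    intro σ h j s hs
    have hsT : s ∉ T := fun hT => hs (target_subset_outerSeq M T j hT)
    rw [reachK_zero, if_neg hsT]
    have : δ ^ j ≤ 1 := pow_le_one₀ hδ0.le hδ1
    linarith
  | succ k ih =>
    intro σ h j s hs
    have hsW : s ∉ Wgood M T := fun hW => hs (Wgood_subset_outer M T j hW)
    obtain ⟨hs1, hs2⟩ := hlvl s hsW
    have hj : lvl s + 1 ≤ j := by
      by_contra hcon
      exact hs (outerSeq_antitone M T (show j ≤ lvl s by omega) hs1)
    have hgoal : reachK M σ (envOf M g hg) T (k+1) h s ≤ 1 - δ ^ (lvl s + 1) := by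
      have hsT : s ∉ T := fun hT => hs (target_subset_outerSeq M T j hT)
      rw [reachK_succ, if_neg hsT]
      apply sum_policy_le σ h s _ _ (by linarith [pow_le_one₀ hδ0.le hδ1 (n := lvl s + 1)])
      intro a ha
      have hpP := hg s a ha
      obtain ⟨hp0, hp1⟩ := M.P_prob s a ha _ hpP
      have henv : (envOf M g hg).toFun h s a = g s a := rfl
      rw [henv]
      rcases hprop s a hsW ha with hesc | hstay
      · -- escape case
        have hsplit := split_le (g s a) (fun t => reachK M σ (envOf M g hg) T k (h ++ [(s,a)]) t)
          ((outerSeq M T (lvl s))ᶜ) hp0 hp1 (1 - δ ^ (lvl s))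
          (by nlinarith [pow_nonneg hδ0.le (lvl s)])
          (fun t ht => ih σ (h ++ [(s,a)]) (lvl s) t ht)
          (fun t => reachK_le_one M σ _ T k _ t)
        have h2 : δ ^ (lvl s + 1) ≤ (1 - (1 - δ ^ lvl s)) * psum (g s a) (outerSeq M T (lvl s))ᶜ := by
          have : (1 - (1 - δ ^ lvl s)) = δ ^ lvl s := by ring
          rw [this, pow_succ]
          exact mul_le_mul_of_nonneg_left hesc (pow_nonneg hδ0.le _)
        linarith
      · -- stay case
        apply stay_le (g s a) _ ((outerSeq M T (lvl s + 1))ᶜ) hp0 hp1 _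
        · intro t hpt
          by_contra htc
          exact hpt (hstay t (by simpa using htc))
        · intro t ht
          exact ih σ (h ++ [(s,a)]) (lvl s + 1) t ht
    have hpow : δ ^ j ≤ δ ^ (lvl s + 1) := pow_anti hδ0.le hδ1 hj
    linarith

end Stmt7Aux

namespace Stmt7Aux

variable {S A : Type} [Fintype S] [Nonempty S] [Fintype A]

lemma pure_reduce (M : RMDP S A) (f : S → A) (hf : ∀ s, f s ∈ M.Act s)
    (ρ : EnvPolicy M) (T : Set S) (k : ℕ) (h : List (S × A)) {s : S} (hsT : s ∉ T) :
    reachK M (pureOf M f hf) ρ T (k+1) h s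
      = ∑ t, ρ.toFun h s (f s) t * reachK M (pureOf M f hf) ρ T k (h ++ [(s, f s)]) t := by
  rw [reachK_succ, if_neg hsT]
  have : ∀ a, (pureOf M f hf).toFun h s a
      * (∑ t, ρ.toFun h s a t * reachK M (pureOf M f hf) ρ T k (h ++ [(s, a)]) t)
      = if a = f s
        then (∑ t, ρ.toFun h s a t * reachK M (pureOf M f hf) ρ T k (h ++ [(s, a)]) t)
        else 0 := by
    intro a
    show (if a = f s then (1:ℝ) else 0) * _ = _
    by_cases h' : a = f s <;> simp [h']
  rw [Finset.sum_congr rfl (fun a _ => this a)]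
  rw [Finset.sum_ite_eq' Finset.univ (f s)]
  simp

lemma agent_main (M : RMDP S A) (T : Set S) (f : S → A) (hf : ∀ s, f s ∈ M.Act s)
    (δ : ℝ) (hδ0 : 0 < δ) (hδ1 : δ ≤ 1) (m : ℕ → ℝ) (J : ℕ)
    (hJW : innerSeq M T (Wgood M T) J = Wgood M T)
    (hm0 : ∀ k, 0 ≤ m k) (hm1 : ∀ k, m k ≤ 1) (hmono : Monotone m)
    (hrec : ∀ k, J ≤ k → δ ^ J + (1 - δ ^ J) * m (k - J) = m k)
    (hm_small : ∀ k, k < J → m k = 0)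
    (hprop : ∀ s i, s ∈ innerSeq M T (Wgood M T) (i+1) → s ∉ innerSeq M T (Wgood M T) i →
      safeAct M (Wgood M T) s (f s) ∧
      ∀ p ∈ M.P s (f s), δ ≤ psum p (innerSeq M T (Wgood M T) i)) :
    ∀ (k i : ℕ) (ρ : EnvPolicy M) (h : List (S × A)) (s : S),
      s ∈ innerSeq M T (Wgood M T) i → i ≤ k →
      δ ^ i + (1 - δ ^ i) * m (k - i) ≤ reachK M (pureOf M f hf) ρ T k h s := by
  intro k
  induction k with
  | zero =>
    intro i ρ h s hsi hik
    have hi0 : i = 0 := Nat.le_zero.mp hik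
    subst hi0
    have hsT : s ∈ T := hsi
    rw [reachK_target M _ ρ 0 h hsT]
    norm_num
  | succ k ihk =>
    intro i
    induction i with
    | zero =>
      intro ρ h s hs0 _
      have hsT : s ∈ T := hs0
      rw [reachK_target M _ ρ (k+1) h hsT]
      norm_num
    | succ i ihi =>
      intro ρ h s hsi hik
      by_cases hsY : s ∈ innerSeq M T (Wgood M T) i
      · have hb := ihi ρ h s hsY (by omega)
        refine le_trans ?_ hb
        have h1 : δ^(i+1) ≤ δ^i := pow_anti hδ0.le hδ1 (Nat.le_succ i)
        have h2 : m (k+1-(i+1)) ≤ m (k+1-i) := hmono (by omega)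
        have h3 : m (k+1-(i+1)) ≤ 1 := hm1 _
        have h4 : δ^i ≤ 1 := pow_le_one₀ hδ0.le hδ1
        nlinarith [mul_nonneg (sub_nonneg.mpr h1) (sub_nonneg.mpr h3),
          mul_nonneg (sub_nonneg.mpr h4) (sub_nonneg.mpr h2)]
      · obtain ⟨hsafe, hprog⟩ := hprop s i hsi hsY
        have hsT : s ∉ T := fun hT => hsY (target_subset_innerSeq M T _ i hT)
        have hred := pure_reduce M f hf ρ T k h hsT
        set p := ρ.toFun h s (f s) with hp_def
        have hpP : p ∈ M.P s (f s) := ρ.mem h s (f s) (hf s)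
        obtain ⟨hp0, hp1⟩ := M.P_prob s (f s) (hf s) p hpP
        set r := fun t => reachK M (pureOf M f hf) ρ T k (h ++ [(s, f s)]) t with hr_def
        have hWb : ∀ t ∈ Wgood M T, m k ≤ r t := by
          intro t ht
          rcases le_or_gt J k with hJk | hkJ
          · have hb := ihk J ρ (h ++ [(s, f s)]) t (by rwa [hJW]) hJk
            calc m k = δ ^ J + (1 - δ ^ J) * m (k - J) := (hrec k hJk).symm
              _ ≤ r t := hb
          · rw [hm_small k hkJ]
            exact reachK_nonneg M _ ρ T k _ t
        have hd1 : δ^i ≤ 1 := pow_le_one₀ hδ0.le hδ1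
        have hxy : m (k-i) ≤ δ^i + (1-δ^i) * m (k-i) := by
          nlinarith [pow_nonneg hδ0.le i, hm1 (k-i), hm0 (k-i)]
        have hsp := split_ge p r (innerSeq M T (Wgood M T) i) (Wgood M T) hp0 hp1
          (fun t hpt => hsafe p hpP t hpt)
          (δ ^ i + (1 - δ ^ i) * m (k - i)) (m (k - i)) hxy
          (fun t ht => ihk i ρ (h ++ [(s, f s)]) t ht (by omega))
          (fun t ht => le_trans (hmono (Nat.sub_le k i)) (hWb t ht))
        have hps : δ ≤ psum p (innerSeq M T (Wgood M T) i) := hprog p hpP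
        have hmul : m (k-i) + ((δ ^ i + (1 - δ ^ i) * m (k - i)) - m (k-i)) * δ
            ≤ m (k-i) + ((δ ^ i + (1 - δ ^ i) * m (k - i)) - m (k-i))
              * psum p (innerSeq M T (Wgood M T) i) := by
          have hnn : 0 ≤ (δ ^ i + (1 - δ ^ i) * m (k - i)) - m (k-i) := by linarith
          nlinarith [mul_le_mul_of_nonneg_left hps hnn]
        have halg : δ^(i+1) + (1 - δ^(i+1)) * m (k - i)
            = m (k-i) + ((δ ^ i + (1 - δ ^ i) * m (k - i)) - m (k-i)) * δ := by
          rw [pow_succ]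
          ring
        have hsub : k + 1 - (i + 1) = k - i := Nat.succ_sub_succ k i
        rw [hred, hsub]
        calc δ^(i+1) + (1 - δ^(i+1)) * m (k - i)
            = m (k-i) + ((δ ^ i + (1 - δ ^ i) * m (k - i)) - m (k-i)) * δ := halg
          _ ≤ m (k-i) + ((δ ^ i + (1 - δ ^ i) * m (k - i)) - m (k-i))
              * psum p (innerSeq M T (Wgood M T) i) := hmul
          _ ≤ ∑ t, p t * r t := hsp
          _ = _ := rfl

end Stmt7Aux

namespace Stmt7Aux

variable {S A : Type} [Fintype S] [Nonempty S] [Fintype A]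

lemma agent_package (M : RMDP S A) (T : Set S) :
    ∃ (f : S → A) (hf : ∀ s, f s ∈ M.Act s),
      ∀ s ∈ Wgood M T, reachVal M (pureOf M f hf) T s = 1 := by
  classical
  set W := Wgood M T with hW_def
  have hWfix : Phi M T W = W := Phi_Wgood M T
  -- ranks
  have hrank : ∀ s, s ∈ W → s ∉ T → ∃ i, s ∈ innerSeq M T W (i+1) ∧ s ∉ innerSeq M T W i ∧
      ∃ a ∈ M.Act s, safeAct M W s a ∧ ∀ p ∈ M.P s a, 0 < psum p (innerSeq M T W i) := by
    intro s hs hsT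
    have hex : ∃ i, s ∈ innerSeq M T W i := by
      have : s ∈ Phi M T W := hWfix.symm ▸ hs
      exact Set.mem_iUnion.mp this
    have h0 : Nat.find hex ≠ 0 := by
      intro h0
      have := Nat.find_spec hex
      rw [h0] at this
      exact hsT this
    obtain ⟨i, hi⟩ : ∃ i, Nat.find hex = i + 1 := ⟨Nat.find hex - 1, by omega⟩
    have hmem : s ∈ innerSeq M T W (i+1) := hi ▸ Nat.find_spec hex
    have hnmem : s ∉ innerSeq M T W i := Nat.find_min hex (by omega)
    rcases hmem with hmem' | hmem'
    · exact absurd hmem' hnmem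
    · exact ⟨i, Or.inr hmem', hnmem, hmem'⟩
  have hchoice : ∀ s : S, ∃ (a : A) (i : ℕ) (d : ℝ), a ∈ M.Act s ∧
      (s ∈ W → s ∉ T → (s ∈ innerSeq M T W (i+1) ∧ s ∉ innerSeq M T W i ∧
        safeAct M W s a ∧ 0 < d ∧ ∀ p ∈ M.P s a, d ≤ psum p (innerSeq M T W i))) := by
    intro s
    by_cases hs : s ∈ W ∧ s ∉ T
    · obtain ⟨i, h1, h2, a, ha, hsafe, hprog⟩ := hrank s hs.1 hs.2
      obtain ⟨d, hd0, hdle⟩ := exists_pos_lb M ha (innerSeq M T W i) hprog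
      exact ⟨a, i, d, ha, fun _ _ => ⟨h1, h2, hsafe, hd0, hdle⟩⟩
    · exact ⟨(M.Act_nonempty s).choose, 0, 1, (M.Act_nonempty s).choose_spec,
        fun h1 h2 => absurd ⟨h1, h2⟩ hs⟩
  choose f iF dF hfact hkey using hchoice
  -- global δ
  set WT : Finset S := Finset.univ.filter (fun s => s ∈ W ∧ s ∉ T) with hWT
  have hδex : ∃ δ : ℝ, 0 < δ ∧ δ ≤ 1 ∧ ∀ s, s ∈ W → s ∉ T → δ ≤ dF s := by
    have hne : (insert (1:ℝ) (WT.image dF)).Nonempty := ⟨1, Finset.mem_insert_self _ _⟩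
    refine ⟨(insert (1:ℝ) (WT.image dF)).min' hne, ?_, ?_, ?_⟩
    · rcases Finset.mem_insert.mp (Finset.min'_mem _ hne) with h | h
      · rw [h]; norm_num
      · obtain ⟨s, hsWT, hds⟩ := Finset.mem_image.mp h
        obtain ⟨_, hsW, hsT⟩ := Finset.mem_filter.mp hsWT
        have := (hkey s hsW hsT).2.2.2.1
        linarith
    · exact Finset.min'_le _ _ (Finset.mem_insert_self _ _)
    · intro s hs hsT
      exact Finset.min'_le _ _ (Finset.mem_insert_of_mem
        (Finset.mem_image_of_mem dF (Finset.mem_filter.mpr ⟨Finset.mem_univ s, hs, hsT⟩)))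
  obtain ⟨δ, hδ0, hδ1, hδle⟩ := hδex
  -- hprop for agent_main
  have hprop : ∀ s i, s ∈ innerSeq M T W (i+1) → s ∉ innerSeq M T W i →
      safeAct M W s (f s) ∧ ∀ p ∈ M.P s (f s), δ ≤ psum p (innerSeq M T W i) := by
    intro s i h1 h2
    have hsW : s ∈ W := hWfix ▸ innerSeq_subset_Phi M T W (i+1) h1
    have hsT : s ∉ T := fun hT => h2 (target_subset_innerSeq M T W i hT)
    obtain ⟨k1, k2, k3, k4, k5⟩ := hkey s hsW hsT
    have hieq : i = iF s := by
      by_contra hne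
      rcases Nat.lt_or_ge i (iF s) with h | h
      · exact k2 (innerSeq_mono M T W (show i + 1 ≤ iF s by omega) h1)
      · exact h2 (innerSeq_mono M T W (show iF s + 1 ≤ i by omega) k1)
    subst hieq
    exact ⟨k3, fun p hp => le_trans (hδle s hsW hsT) (k5 p hp)⟩
  -- J
  obtain ⟨J₀, hJ₀Phi, _⟩ := exists_inner_eq_Phi M T W
  set J := J₀ + 1 with hJ_def
  have hJW : innerSeq M T W J = W := by
    apply Set.Subset.antisymm
    · exact (innerSeq_subset_Phi M T W J).trans hWfix.subset
    · intro x hx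
      have hx' : x ∈ innerSeq M T W J₀ := by rw [hJ₀Phi, hWfix]; exact hx
      exact innerSeq_subset_succ M T W J₀ hx'
  have hJpos : 0 < J := by omega
  -- m
  set c : ℝ := 1 - δ ^ J with hc_def
  have hδJ1 : δ ^ J ≤ 1 := pow_le_one₀ hδ0.le hδ1
  have hδJ0 : 0 < δ ^ J := pow_pos hδ0 J
  have hc0 : 0 ≤ c := by rw [hc_def]; linarith
  have hc1 : c < 1 := by rw [hc_def]; linarith
  set m : ℕ → ℝ := fun k => 1 - c ^ (k / J) with hm_def
  have hm0 : ∀ k, 0 ≤ m k := by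
    intro k; have := pow_le_one₀ hc0 hc1.le (n := k / J); simp only [hm_def]; linarith
  have hm1 : ∀ k, m k ≤ 1 := by
    intro k; have := pow_nonneg hc0 (k / J); simp only [hm_def]; linarith
  have hmono : Monotone m := by
    intro k k' hkk
    have := pow_anti hc0 hc1.le (Nat.div_le_div_right (c := J) hkk)
    simp only [hm_def]; linarith
  have hrec : ∀ k, J ≤ k → δ ^ J + (1 - δ ^ J) * m (k - J) = m k := by
    intro k hJk
    have hdiv : k / J = (k - J) / J + 1 := Nat.div_eq_sub_div hJpos hJk
    simp only [hm_def, hdiv, pow_succ, ← hc_def]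
    ring
  have hm_small : ∀ k, k < J → m k = 0 := by
    intro k hk
    simp only [hm_def, Nat.div_eq_of_lt hk, pow_zero]
    ring
  -- conclusion
  refine ⟨f, hfact, ?_⟩
  intro s hs
  have hWlb : ∀ (ρ : EnvPolicy M) (k : ℕ), m k ≤ reachK M (pureOf M f hfact) ρ T k [] s := by
    intro ρ k
    rcases le_or_gt J k with hJk | hkJ
    · have hb := agent_main M T f hfact δ hδ0 hδ1 m J hJW hm0 hm1 hmono hrec hm_small hprop
        k J ρ [] s (hJW.symm ▸ hs) hJk
      calc m k = δ ^ J + (1 - δ ^ J) * m (k - J) := (hrec k hJk).symm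
        _ ≤ _ := hb
    · rw [hm_small k hkJ]
      exact reachK_nonneg M _ ρ T k [] s
  apply le_antisymm (reachVal_le_one M _ T s)
  apply le_ciInf
  intro ρ
  apply le_of_forall_pos_le_add
  intro ε hε
  obtain ⟨nn, hnn⟩ := exists_pow_lt_of_lt_one hε hc1
  have hmk : 1 - ε ≤ m (J * nn) := by
    simp only [hm_def, Nat.mul_div_cancel_left nn hJpos]
    linarith
  calc (1:ℝ) = (1 - ε) + ε := by ring
    _ ≤ m (J * nn) + ε := by linarith
    _ ≤ reachK M (pureOf M f hfact) ρ T (J * nn) [] s + ε := by linarith [hWlb ρ (J * nn)]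
    _ ≤ reachProb M (pureOf M f hfact) ρ T s + ε := by
        linarith [reachK_le_reachProb M (pureOf M f hfact) ρ T (J * nn) s]

end Stmt7Aux

namespace Stmt7Aux

variable {S A : Type} [Fintype S] [Nonempty S] [Fintype A]

set_option maxHeartbeats 1000000 in
lemma env_package (M : RMDP S A) (T : Set S) :
    ∃ c : ℝ, 0 < c ∧ ∀ s, s ∉ Wgood M T → reachValSup M T s ≤ 1 - c := by
  classical
  have hWouter : Wgood M T = outerSeq M T (Fintype.card S + 1) := rfl
  have hlvl_ex : ∀ s, s ∉ Wgood M T → ∃ j, s ∉ outerSeq M T (j+1) := by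
    intro s hs
    exact ⟨Fintype.card S, by rw [← hWouter]; exact hs⟩
  obtain ⟨lvl, hlvl⟩ : ∃ lvl : S → ℕ, ∀ s, s ∉ Wgood M T →
      s ∈ outerSeq M T (lvl s) ∧ s ∉ outerSeq M T (lvl s + 1) := by
    refine ⟨fun s => if h : s ∉ Wgood M T then Nat.find (hlvl_ex s h) else 0, ?_⟩
    intro s hs
    dsimp only
    rw [dif_pos hs]
    constructor
    · rcases hn : Nat.find (hlvl_ex s hs) with _ | j'
      · exact Set.mem_univ s
      · have hmin := Nat.find_min (hlvl_ex s hs) (show j' < Nat.find (hlvl_ex s hs) by omega)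
        simpa using hmin
    · exact Nat.find_spec (hlvl_ex s hs)
  have hchoiceE : ∀ s a, ∃ p : S → ℝ, (a ∈ M.Act s → p ∈ M.P s a) ∧
      (s ∉ Wgood M T → a ∈ M.Act s →
        0 < psum p (outerSeq M T (lvl s))ᶜ ∨ ∀ t ∈ outerSeq M T (lvl s + 1), p t = 0) := by
    intro s a
    by_cases hs : s ∉ Wgood M T ∧ a ∈ M.Act s
    · have h2 : s ∉ Phi M T (outerSeq M T (lvl s)) := (hlvl s hs.1).2
      rcases (notMem_Phi M T h2).2 a hs.2 with ⟨p, hp, hpos⟩ | ⟨p, hp, hstay⟩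
      · exact ⟨p, fun _ => hp, fun _ _ => Or.inl hpos⟩
      · exact ⟨p, fun _ => hp, fun _ _ => Or.inr hstay⟩
    · by_cases ha : a ∈ M.Act s
      · exact ⟨(M.P_nonempty s a ha).choose, fun _ => (M.P_nonempty s a ha).choose_spec,
          fun h1 h2 => absurd ⟨h1, h2⟩ hs⟩
      · exact ⟨fun _ => 0, fun h => absurd h ha, fun h1 h2 => absurd ⟨h1, h2⟩ hs⟩
  choose gE hgE1 hgE2 using hchoiceE
  have hg : ∀ s a, a ∈ M.Act s → gE s a ∈ M.P s a := fun s a ha => hgE1 s a ha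
  -- δ'
  obtain ⟨esc, hesc⟩ : ∃ esc : S → A → ℝ, ∀ s a,
      esc s a = psum (gE s a) (outerSeq M T (lvl s))ᶜ :=
    ⟨fun s a => psum (gE s a) (outerSeq M T (lvl s))ᶜ, fun _ _ => rfl⟩
  have hδex : ∃ δ : ℝ, 0 < δ ∧ δ ≤ 1 ∧ ∀ s a, s ∉ Wgood M T → a ∈ M.Act s →
      0 < esc s a → δ ≤ esc s a := by
    set QF : Finset (S × A) := Finset.univ.filter
      (fun q => q.1 ∉ Wgood M T ∧ q.2 ∈ M.Act q.1 ∧ 0 < esc q.1 q.2) with hQF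
    have hne : (insert (1:ℝ) (QF.image (fun q => esc q.1 q.2))).Nonempty :=
      ⟨1, Finset.mem_insert_self _ _⟩
    refine ⟨(insert (1:ℝ) (QF.image (fun q => esc q.1 q.2))).min' hne, ?_, ?_, ?_⟩
    · rcases Finset.mem_insert.mp (Finset.min'_mem _ hne) with h | h
      · rw [h]; norm_num
      · obtain ⟨q, hq, hval⟩ := Finset.mem_image.mp h
        obtain ⟨_, _, _, hpos⟩ := Finset.mem_filter.mp hq
        linarith
    · exact Finset.min'_le _ _ (Finset.mem_insert_self _ _)
    · intro s a hs ha hpos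
      exact Finset.min'_le _ _ (Finset.mem_insert_of_mem
        (Finset.mem_image_of_mem _ (Finset.mem_filter.mpr ⟨Finset.mem_univ (s, a), hs, ha, hpos⟩)))
  obtain ⟨δ, hδ0, hδ1, hδle⟩ := hδex
  have hpropE : ∀ s a, s ∉ Wgood M T → a ∈ M.Act s →
      (δ ≤ psum (gE s a) (outerSeq M T (lvl s))ᶜ) ∨
      (∀ t ∈ outerSeq M T (lvl s + 1), gE s a t = 0) := by
    intro s a hs ha
    rcases hgE2 s a hs ha with hpos | hstay
    · refine Or.inl ?_
      have := hδle s a hs ha (by rw [hesc]; exact hpos)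
      rwa [hesc] at this
    · exact Or.inr hstay
  refine ⟨δ ^ (Fintype.card S + 1), pow_pos hδ0 _, ?_⟩
  intro s hs
  apply ciSup_le
  intro σ
  apply (reachVal_le_reachProb M σ (envOf M gE hg) T s).trans
  apply ciSup_le
  intro k
  exact env_main M T gE hg δ hδ0 hδ1 lvl hlvl hpropE k σ [] (Fintype.card S + 1) s hs

end Stmt7Aux

theorem stmt7 (M : RMDP S A) (T : Set S) :
    ∃ σstar : AgentPolicy M, σstar.PureMemoryless ∧
      ∀ s : S, (reachValSup M T s = 1 ↔ reachVal M σstar T s = 1) := by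
  classical
  obtain ⟨f, hf, hagent⟩ := Stmt7Aux.agent_package M T
  obtain ⟨c, hc0, henv⟩ := Stmt7Aux.env_package M T
  refine ⟨Stmt7Aux.pureOf M f hf, Stmt7Aux.pureOf_pm M f hf, ?_⟩
  intro s
  by_cases hs : s ∈ Stmt7Aux.Wgood M T
  · have h1 : reachVal M (Stmt7Aux.pureOf M f hf) T s = 1 := hagent s hs
    constructor
    · intro _; exact h1
    · intro _
      apply le_antisymm (Stmt7Aux.reachValSup_le_one M T s)
      calc (1:ℝ) = reachVal M (Stmt7Aux.pureOf M f hf) T s := h1.symm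
        _ ≤ reachValSup M T s := Stmt7Aux.reachVal_le_sup M _ T s
  · have h2 : reachValSup M T s ≤ 1 - c := henv s hs
    have hlt : reachValSup M T s < 1 := by linarith
    constructor
    · intro h; exact absurd h hlt.ne
    · intro h
      have := Stmt7Aux.reachVal_le_sup M (Stmt7Aux.pureOf M f hf) T s
      rw [h] at this
      linarith
end

section
/- Let n ≥ 1 be a real number and let F : ℕ × ℕ → ℝ be a nonnegative function satisfying F(0,l) = 0 and F(d,0) = 0 for all d,l ∈ ℕ, and F(d,l) ≤ 4n³ + n·F(d−1,l−1) + F(d−1,l) for all d,l ≥ 1. Then for all d,l ∈ ℕ, F(d,l) ≤ 4·n^{l+2}·C(d+l, l) − 4n², where C(·,·) denotes the binomial coefficient. -/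
/-- The recurrence bound at the core of the quasi-polynomial oracle-complexity
analysis of the `EffASParity` algorithm. -/
theorem stmt13 (n : ℝ) (hn : 1 ≤ n) (F : ℕ → ℕ → ℝ)
    (hF_nonneg : ∀ d l, 0 ≤ F d l)
    (hF_d0 : ∀ l, F 0 l = 0)
    (hF_l0 : ∀ d, F d 0 = 0)
    (hrec : ∀ d l, 1 ≤ d → 1 ≤ l →
      F d l ≤ 4 * n ^ 3 + n * F (d - 1) (l - 1) + F (d - 1) l) :
    ∀ d l, F d l ≤ 4 * n ^ (l + 2) * ((d + l).choose l : ℝ) - 4 * n ^ 2 := by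
  have hn0 : (0:ℝ) < n := lt_of_lt_of_le one_pos hn
  intro d
  induction d with
  | zero =>
    intro l
    rw [hF_d0]
    simp only [Nat.zero_add, Nat.choose_self, Nat.cast_one, mul_one]
    have h2 : n ^ 2 ≤ n ^ (l + 2) := pow_le_pow_right₀ hn (by omega)
    linarith
  | succ d ih =>
    intro l
    cases l with
    | zero =>
      rw [hF_l0]
      simp [Nat.choose_zero_right]
    | succ l =>
      have h1 := ih l
      have h2 := ih (l + 1)
      have h3 := hrec (d + 1) (l + 1) (by omega) (by omega)
      simp only [Nat.add_sub_cancel] at h3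
      have hc1 : ((d + l).choose l : ℝ) ≤ ((d + l + 1).choose l : ℝ) := by
        exact_mod_cast Nat.choose_le_choose l (by omega)
      have hc2 : ((d + 1 + (l + 1)).choose (l + 1) : ℝ)
          = ((d + l + 1).choose l : ℝ) + ((d + l + 1).choose (l + 1) : ℝ) := by
        have he : d + 1 + (l + 1) = (d + l + 1) + 1 := by omega
        rw [he, Nat.choose_succ_succ]
        push_cast; ring
      have hpnn : (0:ℝ) ≤ n ^ (l + 1 + 2) := le_of_lt (pow_pos hn0 _)
      have hp : n ^ (l + 1 + 2) = n * n ^ (l + 2) := by ring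
      have hd1 : (d + 1 + (l + 1) : ℕ) = d + l + 1 + 1 := by omega
      have hmul := mul_le_mul_of_nonneg_left h1 hn0.le
      have hc1' := mul_le_mul_of_nonneg_left hc1 hpnn
      have h2' : F d (l + 1) ≤ 4 * n ^ (l + 1 + 2) * ((d + l + 1).choose (l + 1) : ℝ) - 4 * n ^ 2 := by
        have he : d + (l + 1) = d + l + 1 := by omega
        rw [← he]; exact h2
      nlinarith [hmul, h2', h3, hc1', hc2, sq_nonneg n]
end

section
/- Let S be a finite set, B ⊆ S with B ≠ S, and let p̄ : S → [0,1] be a probability vector on S (nonnegative entries summing to 1). Set c = Σ_{b∈B} p̄(b) and m = |S∖B|, and let d ≥ 1 be an integer. Then the minimum of Σ_{t∈S} |q(t) − p̄(t)|^d over all probability vectors q on S with q(b) = 0 for all b ∈ B equals Σ_{b∈B} p̄(b)^d + m·(c/m)^d, and it is attained by the vector q with q(b) = 0 for b ∈ B and q(t) = p̄(t) + c/m for t ∈ S∖B. -/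
open scoped BigOperators Classical

/-!
Every admissible `q` has to move the mass `c = ∑_{b ∈ B} p̄(b)` off `B`, so its deviation on `B`
is the fixed vector `p̄|_B`, while its deviations on the `m` states outside `B` sum to `c`. By
convexity of `x ↦ x ^ d` (Jensen with uniform weights), `m` nonnegative numbers of total at least
`c` have `d`-th powers summing to at least `m (c / m) ^ d`, with equality for the uniform shift
`c / m`.
-/

open Finset

lemma card_mul_div_card_pow_le_sum_pow {ι : Type*} (s : Finset ι) {f : ι → ℝ} {c : ℝ}
    (hc : 0 ≤ c) (hf : ∀ i ∈ s, 0 ≤ f i) (hcf : c ≤ ∑ i ∈ s, f i) (d : ℕ) :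
    #s * (c / #s) ^ d ≤ ∑ i ∈ s, f i ^ d := by
  rcases s.eq_empty_or_nonempty with rfl | hs
  · simp
  have hcard : (0 : ℝ) < #s := by exact_mod_cast hs.card_pos
  have jensen := Real.pow_arith_mean_le_arith_mean_pow s (fun _ => (#s : ℝ)⁻¹) f
    (fun _ _ => by positivity) (by simp [hcard.ne']) hf d
  rw [← mul_sum, ← mul_sum, ← div_eq_inv_mul] at jensen
  calc (#s : ℝ) * (c / #s) ^ d ≤ #s * ((∑ i ∈ s, f i) / #s) ^ d := by gcongr
    _ ≤ #s * ((#s : ℝ)⁻¹ * ∑ i ∈ s, f i ^ d) := by gcongr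
    _ = ∑ i ∈ s, f i ^ d := by field_simp

section VanishingOn

variable {S : Type*} [Fintype S] {B : Finset S} {p r : S → ℝ}

lemma sum_abs_sub_pow_eq_of_eq_zero_on (hp : ∀ t, 0 ≤ p t) (hr : ∀ b ∈ B, r b = 0) (d : ℕ) :
    ∑ t, |r t - p t| ^ d = ∑ b ∈ B, p b ^ d + ∑ t ∈ univ \ B, |r t - p t| ^ d := by
  rw [← sum_sdiff (subset_univ B), add_comm]
  congr 1
  exact sum_congr rfl fun b hb => by rw [hr b hb, zero_sub, abs_neg, abs_of_nonneg (hp b)]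

lemma sum_sdiff_sub_eq_sum_iff_of_eq_zero_on (hr : ∀ b ∈ B, r b = 0) :
    ∑ t ∈ univ \ B, (r t - p t) = ∑ b ∈ B, p b ↔ ∑ t, r t = ∑ t, p t := by
  rw [← sum_sdiff (subset_univ B) (f := r), ← sum_sdiff (subset_univ B) (f := p),
    sum_eq_zero hr, sum_sub_distrib]
  constructor <;> intro h <;> linarith

end VanishingOn

theorem stmt14_general {S : Type} [Fintype S] (B : Finset S) (hB : B ≠ Finset.univ)
    (pbar : S → ℝ) (hpos : ∀ t, 0 ≤ pbar t) (hsum : ∑ t, pbar t = 1)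
    (d : ℕ) :
    letI c : ℝ := ∑ b ∈ B, pbar b
    letI m : ℕ := (Finset.univ \ B).card
    letI q : S → ℝ := fun t => if t ∈ B then 0 else pbar t + c / m
    (∀ t, 0 ≤ q t) ∧ (∑ t, q t = 1) ∧ (∀ b ∈ B, q b = 0) ∧
      (∑ t, |q t - pbar t| ^ d = ∑ b ∈ B, pbar b ^ d + m * (c / m) ^ d) ∧
      IsLeast
        {x : ℝ | ∃ r : S → ℝ, (∀ t, 0 ≤ r t) ∧ (∑ t, r t = 1) ∧
          (∀ b ∈ B, r b = 0) ∧ x = ∑ t, |r t - pbar t| ^ d}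
        (∑ b ∈ B, pbar b ^ d + m * (c / m) ^ d) := by
  set c : ℝ := ∑ b ∈ B, pbar b
  set m : ℕ := #(univ \ B)
  set q : S → ℝ := fun t => if t ∈ B then 0 else pbar t + c / m
  have hc : 0 ≤ c := sum_nonneg fun b _ => hpos b
  have hm : (m : ℝ) ≠ 0 := by
    have : (univ \ B).Nonempty := sdiff_nonempty.mpr fun h => hB (univ_subset_iff.mp h)
    exact_mod_cast this.card_pos.ne'
  have hqB : ∀ b ∈ B, q b = 0 := fun b hb => if_pos hb
  have hq_sub : ∀ t ∈ univ \ B, q t - pbar t = c / m := fun t ht => by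
    simp [q, (mem_sdiff.mp ht).2]
  have hq0 : ∀ t, 0 ≤ q t := fun t => by
    by_cases ht : t ∈ B
    · exact (hqB t ht).ge
    · simp only [q, if_neg ht]
      exact add_nonneg (hpos t) (div_nonneg hc m.cast_nonneg)
  have hqsum : ∑ t, q t = 1 := by
    rw [← hsum, ← sum_sdiff_sub_eq_sum_iff_of_eq_zero_on hqB, sum_congr rfl hq_sub, sum_const,
      nsmul_eq_mul, mul_div_cancel₀ _ hm]
  have hqval : ∑ t, |q t - pbar t| ^ d = ∑ b ∈ B, pbar b ^ d + m * (c / m) ^ d := by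
    have hshift : ∑ t ∈ univ \ B, |q t - pbar t| ^ d = m * (c / m) ^ d := by
      rw [sum_congr rfl fun t ht => by rw [hq_sub t ht], sum_const, nsmul_eq_mul,
        abs_of_nonneg (by positivity)]
    rw [sum_abs_sub_pow_eq_of_eq_zero_on hpos hqB, hshift]
  refine ⟨hq0, hqsum, hqB, hqval, ⟨q, hq0, hqsum, hqB, hqval.symm⟩, ?_⟩
  rintro _ ⟨r, -, hr1, hrB, rfl⟩
  have hmass : ∑ t ∈ univ \ B, (r t - pbar t) = c :=
    (sum_sdiff_sub_eq_sum_iff_of_eq_zero_on hrB).mpr (hr1.trans hsum.symm)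
  rw [sum_abs_sub_pow_eq_of_eq_zero_on hpos hrB]
  gcongr
  refine card_mul_div_card_pow_le_sum_pow _ hc (fun _ _ => abs_nonneg _) ?_ d
  exact hmass ▸ sum_le_sum fun t _ => le_abs_self _

/-- Correctness of the oracle `force_A` for `L_d`-ball uncertainty sets:
given a probability vector `p̄` on a finite set `S` and `B ⊆ S` with `B ≠ S`,
the minimum of `∑_{t∈S} |q(t) − p̄(t)|^d` over all probability vectors `q`
vanishing on `B` equals `∑_{b∈B} p̄(b)^d + m·(c/m)^d`, where `c = Σ_{b∈B} p̄(b)`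
and `m = |S∖B|`, and it is attained by zeroing `p̄` on `B` and distributing the
mass `c` equally over `S ∖ B`. -/
theorem stmt14 {S : Type} [Fintype S] (B : Finset S) (hB : B ≠ Finset.univ)
    (pbar : S → ℝ) (hpos : ∀ t, 0 ≤ pbar t) (hsum : ∑ t, pbar t = 1)
    (d : ℕ) (hd : 1 ≤ d) :
    letI c : ℝ := ∑ b ∈ B, pbar b
    letI m : ℕ := (Finset.univ \ B).card
    letI q : S → ℝ := fun t => if t ∈ B then 0 else pbar t + c / m
    (∀ t, 0 ≤ q t) ∧ (∑ t, q t = 1) ∧ (∀ b ∈ B, q b = 0) ∧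
      (∑ t, |q t - pbar t| ^ d = ∑ b ∈ B, pbar b ^ d + m * (c / m) ^ d) ∧
      IsLeast
        {x : ℝ | ∃ r : S → ℝ, (∀ t, 0 ≤ r t) ∧ (∑ t, r t = 1) ∧
          (∀ b ∈ B, r b = 0) ∧ x = ∑ t, |r t - pbar t| ^ d}
        (∑ b ∈ B, pbar b ^ d + m * (c / m) ^ d) :=
  stmt14_general B hB pbar hpos hsum d
end

section
/- Let S be a finite set, B ⊆ S with B ≠ S, and let p̄ : S → [0,1] be a probability vector on S (nonnegative entries summing to 1). Set c = Σ_{b∈B} p̄(b) and m = |S∖B|. Then the minimum of max_{t∈S} |q(t) − p̄(t)| over all probability vectors q on S with q(b) = 0 for all b ∈ B equals max( max_{b∈B} p̄(b), c/m ) (where the maximum over an empty B is taken to be 0), and it is attained by the vector q with q(b) = 0 for b ∈ B and q(t) = p̄(t) + c/m for t ∈ S∖B. -/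
/-!
Zeroing `p̄` on `B` already costs `p̄ b` at each `b ∈ B`. The mass `c` removed from `B` has to
reappear on the `m` states outside `B`, so by averaging some state outside `B` gains at least
`c / m`. Spreading `c` equally over `S ∖ B` meets both lower bounds at once.
-/

open scoped Classical

open Finset

lemma biSup_le_of_nonneg {S : Type*} {B : Finset S} {p : S → ℝ} {x : ℝ} (hx : 0 ≤ x)
    (h : ∀ b ∈ B, p b ≤ x) : ⨆ b ∈ B, p b ≤ x :=
  Real.iSup_le (fun b => Real.iSup_le (h b) hx) hx

section

variable {S : Type*} [Fintype S] (B : Finset S) (p : S → ℝ)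

noncomputable def equalRedistribution (t : S) : ℝ :=
  if t ∈ B then 0 else p t + (∑ b ∈ B, p b) / #(univ \ B)

variable {B p}

lemma le_biSup_of_mem {b : S} (hb : b ∈ B) : p b ≤ ⨆ b ∈ B, p b :=
  calc p b = ⨆ _ : b ∈ B, p b := (ciSup_pos (f := fun _ => p b) hb).symm
    _ ≤ ⨆ b ∈ B, p b := le_ciSup (f := fun b => ⨆ _ : b ∈ B, p b) (Set.finite_range _).bddAbove b

lemma card_compl_pos (hB : B ≠ univ) : (0 : ℝ) < #(univ \ B) := by
  rw [Nat.cast_pos, card_pos, sdiff_nonempty]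
  exact fun h => hB (univ_subset_iff.1 h)

lemma sum_div_card_compl_nonneg (hp : ∀ t, 0 ≤ p t) : 0 ≤ (∑ b ∈ B, p b) / #(univ \ B) :=
  div_nonneg (sum_nonneg fun b _ => hp b) (Nat.cast_nonneg _)

lemma equalRedistribution_of_mem {t : S} (ht : t ∈ B) : equalRedistribution B p t = 0 :=
  if_pos ht

lemma equalRedistribution_nonneg (hp : ∀ t, 0 ≤ p t) (t : S) :
    0 ≤ equalRedistribution B p t := by
  unfold equalRedistribution
  split_ifs
  · exact le_rfl
  · exact add_nonneg (hp t) (sum_div_card_compl_nonneg hp)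

lemma sum_equalRedistribution (hB : B ≠ univ) :
    ∑ t, equalRedistribution B p t = ∑ t, p t := by
  have hout : ∑ t ∈ univ \ B, equalRedistribution B p t =
      ∑ t ∈ univ \ B, (p t + (∑ b ∈ B, p b) / #(univ \ B)) :=
    sum_congr rfl fun t ht => if_neg (mem_sdiff.1 ht).2
  rw [← sum_sdiff (subset_univ B), ← sum_sdiff (subset_univ B) (f := p),
    sum_eq_zero fun t ht => equalRedistribution_of_mem ht, hout, sum_add_distrib, sum_const,
    nsmul_eq_mul, mul_div_cancel₀ _ (card_compl_pos hB).ne', add_zero]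

lemma abs_equalRedistribution_sub (hp : ∀ t, 0 ≤ p t) (t : S) :
    |equalRedistribution B p t - p t| = if t ∈ B then p t else (∑ b ∈ B, p b) / #(univ \ B) := by
  unfold equalRedistribution
  split_ifs
  · rw [zero_sub, abs_neg, abs_of_nonneg (hp t)]
  · rw [add_sub_cancel_left, abs_of_nonneg (sum_div_card_compl_nonneg hp)]

lemma exists_div_card_le_sub (hB : B ≠ univ) {r : S → ℝ} (hrB : ∀ b ∈ B, r b = 0)
    (hr : ∑ t, r t = ∑ t, p t) :
    ∃ t ∈ univ \ B, (∑ b ∈ B, p b) / #(univ \ B) ≤ r t - p t := by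
  have hm := card_compl_pos hB
  have hmass : ∑ t ∈ univ \ B, (r t - p t) = ∑ b ∈ B, p b := by
    rw [sum_sub_distrib, sum_sdiff_eq_sub (subset_univ B), sum_sdiff_eq_sub (subset_univ B),
      sum_eq_zero hrB, hr]
    ring
  apply exists_le_of_sum_le (card_pos.1 (Nat.cast_pos.1 hm))
  rw [sum_const, nsmul_eq_mul, hmass, mul_div_cancel₀ _ hm.ne']

lemma max_le_iSup_abs_sub (hB : B ≠ univ) (hp : ∀ t, 0 ≤ p t) {r : S → ℝ}
    (hrB : ∀ b ∈ B, r b = 0) (hr : ∑ t, r t = ∑ t, p t) :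
    max (⨆ b ∈ B, p b) ((∑ b ∈ B, p b) / #(univ \ B)) ≤ ⨆ t, |r t - p t| := by
  have hbdd : BddAbove (Set.range fun t => |r t - p t|) := (Set.finite_range _).bddAbove
  refine max_le (biSup_le_of_nonneg (Real.iSup_nonneg fun t => abs_nonneg _) fun b hb => ?_) ?_
  · calc p b = |r b - p b| := by rw [hrB b hb, zero_sub, abs_neg, abs_of_nonneg (hp b)]
      _ ≤ ⨆ t, |r t - p t| := le_ciSup hbdd b
  · obtain ⟨t, -, ht⟩ := exists_div_card_le_sub hB hrB hr
    exact ht.trans ((le_abs_self _).trans (le_ciSup hbdd t))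

lemma iSup_abs_equalRedistribution_sub (hB : B ≠ univ) (hp : ∀ t, 0 ≤ p t) :
    ⨆ t, |equalRedistribution B p t - p t| =
      max (⨆ b ∈ B, p b) ((∑ b ∈ B, p b) / #(univ \ B)) := by
  refine le_antisymm ?_ (max_le_iSup_abs_sub hB hp (fun b => equalRedistribution_of_mem)
    (sum_equalRedistribution hB))
  refine Real.iSup_le (fun t => ?_) ((sum_div_card_compl_nonneg hp).trans (le_max_right _ _))
  rw [abs_equalRedistribution_sub hp]
  split_ifs with ht
  · exact (le_biSup_of_mem ht).trans (le_max_left _ _)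
  · exact le_max_right _ _

end

/-- Correctness of the oracle `force_A` for `L_∞`-ball uncertainty sets:
given a probability vector `p̄` on a finite set `S` and `B ⊆ S` with `B ≠ S`,
the minimum of `max_{t∈S} |q(t) − p̄(t)|` over all probability vectors `q`
vanishing on `B` equals `max(max_{b∈B} p̄(b), c/m)` (the maximum over an empty
`B` being `0`), where `c = Σ_{b∈B} p̄(b)` and `m = |S∖B|`, and it is attained
by zeroing `p̄` on `B` and distributing the mass `c` equally over `S ∖ B`. -/
theorem stmt15 {S : Type} [Fintype S] (B : Finset S) (hB : B ≠ Finset.univ)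
    (pbar : S → ℝ) (hpos : ∀ t, 0 ≤ pbar t) (hsum : ∑ t, pbar t = 1) :
    letI c : ℝ := ∑ b ∈ B, pbar b
    letI m : ℕ := (Finset.univ \ B).card
    letI q : S → ℝ := fun t => if t ∈ B then 0 else pbar t + c / m
    (∀ t, 0 ≤ q t) ∧ (∑ t, q t = 1) ∧ (∀ b ∈ B, q b = 0) ∧
      ((⨆ t, |q t - pbar t|) = max (⨆ b ∈ B, pbar b) (c / m)) ∧
      IsLeast
        {x : ℝ | ∃ r : S → ℝ, (∀ t, 0 ≤ r t) ∧ (∑ t, r t = 1) ∧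
          (∀ b ∈ B, r b = 0) ∧ x = ⨆ t, |r t - pbar t|}
        (max (⨆ b ∈ B, pbar b) (c / m)) := by
  have hq_sum : ∑ t, equalRedistribution B pbar t = 1 := (sum_equalRedistribution hB).trans hsum
  have hq_dev := iSup_abs_equalRedistribution_sub hB hpos
  refine ⟨equalRedistribution_nonneg hpos, hq_sum, fun b => equalRedistribution_of_mem, hq_dev,
    ⟨equalRedistribution B pbar, equalRedistribution_nonneg hpos, hq_sum,
      fun b => equalRedistribution_of_mem, hq_dev.symm⟩, ?_⟩
  rintro x ⟨r, -, hr, hrB, rfl⟩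
  exact max_le_iSup_abs_sub hB hpos hrB (hr.trans hsum.symm)
end
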